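/- arXiv:0903.1741 — 12 statements merged into one kernel-verified Lean document; each statement's English description precedes it below -/
import Mathlib

section
/- Let a group Γ act by homeomorphisms on a compact Hausdorff space X such that every orbit is finite and the action is uniformly continuous (for every x ∈ X and every neighborhood W of x there is a neighborhood V of x with g•V ⊆ W for every g in the stabilizer of x). Then the action is Lyapunov stable: for every entourage U of the unique uniform structure on X there is an entourage V such that (g•x, g•y) ∈ U for all g ∈ Γ whenever (x,y) ∈ V. -/
/-!
If the orbit of `x` is finite, pick `h₁, …, hₙ` with `hᵢ • x` running through it; every `g` then
factors as `g = hᵢ k` with `k` in the stabilizer of `x`. Continuity of the finitely many `hᵢ`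
together with uniform continuity at `x` (which controls all `k` at once) gives equicontinuity
of the action at `x`. On a compact space equicontinuity upgrades to uniform equicontinuity,
which is Lyapunov stability.
-/

open Filter Topology MulAction

theorem equicontinuousAt_smul_of_orbit_finite {Γ X : Type*} [Group Γ] [UniformSpace X]
    [MulAction Γ X] [ContinuousConstSMul Γ X] {x : X} (hfin : (orbit Γ x).Finite)
    (hUC : ∀ W ∈ 𝓝 x, ∃ V ∈ 𝓝 x, ∀ k : Γ, k • x = x → ∀ y ∈ V, k • y ∈ W) :
    EquicontinuousAt (fun g : Γ => (g • · : X → X)) x := by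
  intro U hU
  have : Finite (orbit Γ x) := hfin.to_subtype
  have hW : (⋂ z : orbit Γ x, (z.2.choose • · : X → X) ⁻¹' UniformSpace.ball z U) ∈ 𝓝 x := by
    refine iInter_mem.2 fun z => ?_
    refine (continuous_const_smul z.2.choose).continuousAt.preimage_mem_nhds ?_
    simpa only [z.2.choose_spec] using UniformSpace.ball_mem_nhds _ hU
  obtain ⟨V, hV, hVW⟩ := hUC _ hW
  filter_upwards [hV] with y hy g
  have hgx : g • x ∈ orbit Γ x := mem_orbit x g
  have hstab : (hgx.choose⁻¹ * g) • x = x := by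
    rw [mul_smul, inv_smul_eq_iff]
    exact hgx.choose_spec.symm
  have hmem := Set.mem_iInter.1 (hVW _ hstab y hy) ⟨g • x, hgx⟩
  simpa only [Set.mem_preimage, UniformSpace.ball, smul_smul, mul_inv_cancel_left] using hmem

theorem stmt1_general {Γ X : Type*} [Group Γ] [UniformSpace X] [CompactSpace X]
    [MulAction Γ X] [ContinuousConstSMul Γ X]
    (hfin : ∀ x : X, (MulAction.orbit Γ x).Finite)
    (hUC : ∀ x : X, ∀ W ∈ nhds x, ∃ V ∈ nhds x, ∀ g : Γ, g • x = x → ∀ y ∈ V, g • y ∈ W) :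
    ∀ U ∈ uniformity X, ∃ V ∈ uniformity X,
      ∀ (g : Γ) (x y : X), (x, y) ∈ V → (g • x, g • y) ∈ U := by
  have hstable : UniformEquicontinuous (fun g : Γ => (g • · : X → X)) :=
    CompactSpace.uniformEquicontinuous_of_equicontinuous fun x =>
      equicontinuousAt_smul_of_orbit_finite (hfin x) (hUC x)
  intro U hU
  exact ⟨_, hstable U hU, fun g x y hxy => hxy g⟩

/-- For actions by homeomorphisms on a compact Hausdorff space with all orbits finite,
uniform continuity implies Lyapunov stability. -/
theorem stmt1 {Γ X : Type*} [Group Γ] [UniformSpace X] [CompactSpace X] [T2Space X]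
    [MulAction Γ X] [ContinuousConstSMul Γ X]
    (hfin : ∀ x : X, (MulAction.orbit Γ x).Finite)
    (hUC : ∀ x : X, ∀ W ∈ nhds x, ∃ V ∈ nhds x, ∀ g : Γ, g • x = x → ∀ y ∈ V, g • y ∈ W) :
    ∀ U ∈ uniformity X, ∃ V ∈ uniformity X,
      ∀ (g : Γ) (x y : X), (x, y) ∈ V → (g • x, g • y) ∈ U :=
  stmt1_general hfin hUC
end

section
/- Let a group Γ act by homeomorphisms on a compact Hausdorff space X, with the action Lyapunov stable with respect to the unique compatible uniform structure. Then for every continuous function φ : X → ℂ and every x ∈ X, the function φ_x : Γ → ℂ defined by φ_x(g) = φ(g•x) is almost periodic, i.e., the set of left translates {g ↦ φ_x(hg) : h ∈ Γ} is totally bounded in the sup-norm on bounded functions Γ → ℂ. -/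
/-!
Lyapunov stability says exactly that the maps `y ↦ h • y` form a uniformly equicontinuous family,
so the functions `y ↦ φ (h • y)` are equicontinuous on the compact space `X` and take values in
the compact set `range φ`. By Arzelà–Ascoli they form a totally bounded set for uniform
convergence on `X`, and restricting them to the orbit `g ↦ g • x` does not increase uniform
distances; the restrictions are precisely the left translates of `φ_x`.
-/

open Set Function

theorem UniformContinuous.comp_uniformEquicontinuous {ι α β γ : Type*} [UniformSpace α]
    [UniformSpace β] [UniformSpace γ] {g : α → γ} (hg : UniformContinuous g) {F : ι → β → α}
    (hF : UniformEquicontinuous F) : UniformEquicontinuous fun i => g ∘ F i :=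
  fun _ hU => hF _ (hg hU)

theorem Equicontinuous.totallyBounded_range_uniformFun {ι X α : Type*} [TopologicalSpace X]
    [CompactSpace X] [UniformSpace α] {F : ι → X → α} (hF : Equicontinuous F)
    (hbdd : TotallyBounded (range F)) : TotallyBounded (range (UniformFun.ofFun ∘ F)) := by
  let _ : UniformSpace ι := (Pi.uniformSpace _).comap F
  have hF_pi : IsUniformInducing F := isUniformInducing_iff_uniformSpace.2 rfl
  have hF_unif : IsUniformInducing (UniformFun.ofFun ∘ F) :=
    hF.isUniformInducing_uniformFun_iff_pi.2 hF_pi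
  rw [← image_univ] at hbdd ⊢
  exact (totallyBounded_image_iff hF_unif).2 ((totallyBounded_image_iff hF_pi).1 hbdd)

theorem Equicontinuous.totallyBounded_range_uniformFun_of_isCompact {ι X α : Type*}
    [TopologicalSpace X] [CompactSpace X] [UniformSpace α] {F : ι → X → α}
    (hF : Equicontinuous F) {K : Set α} (hK : IsCompact K) (hFK : ∀ i x, F i x ∈ K) :
    TotallyBounded (range (UniformFun.ofFun ∘ F)) :=
  hF.totallyBounded_range_uniformFun <| (isCompact_univ_pi fun _ => hK).totallyBounded.subset <|
    range_subset_iff.2 fun i => mem_univ_pi.2 (hFK i)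

theorem stmt2_general {Γ X : Type*} [Group Γ] [UniformSpace X] [CompactSpace X]
    [MulAction Γ X]
    (hLyap : ∀ U ∈ uniformity X, ∃ V ∈ uniformity X,
      ∀ (g : Γ) (x y : X), (x, y) ∈ V → (g • x, g • y) ∈ U)
    (φ : C(X, ℂ)) (x : X) :
    TotallyBounded
      {F : UniformFun Γ ℂ | ∃ h : Γ, F = UniformFun.ofFun fun g => φ ((h * g) • x)} := by
  have hsmul : UniformEquicontinuous fun h : Γ => (h • · : X → X) := fun U hU => by
    obtain ⟨V, hV, hVU⟩ := hLyap U hU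
    exact Filter.mem_of_superset hV fun p hp h => hVU h _ _ hp
  have hφ : Equicontinuous fun h : Γ => φ ∘ (h • ·) :=
    (CompactSpace.uniformContinuous_of_continuous φ.continuous).comp_uniformEquicontinuous
      hsmul |>.equicontinuous
  have hφ_tb := hφ.totallyBounded_range_uniformFun_of_isCompact (isCompact_range φ.continuous)
    fun _ _ => mem_range_self _
  convert hφ_tb.image (UniformFun.precomp_uniformContinuous (f := fun g : Γ => g • x)) using 1
  ext F
  simp [mul_smul, comp_def, eq_comm]

/-- For a Lyapunov stable action on a compact Hausdorff space, the functions
`φ_x : g ↦ φ(g • x)` are almost periodic: the set of left translates is totally bounded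
in the uniform structure of uniform (sup-norm) convergence. -/
theorem stmt2 {Γ X : Type*} [Group Γ] [UniformSpace X] [CompactSpace X] [T2Space X]
    [MulAction Γ X] [ContinuousConstSMul Γ X]
    (hLyap : ∀ U ∈ uniformity X, ∃ V ∈ uniformity X,
      ∀ (g : Γ) (x y : X), (x, y) ∈ V → (g • x, g • y) ∈ U)
    (φ : C(X, ℂ)) (x : X) :
    TotallyBounded
      {F : UniformFun Γ ℂ | ∃ h : Γ, F = UniformFun.ofFun fun g => φ ((h * g) • x)} :=
  stmt2_general hLyap φ x
end

section
/- Let a group Γ act by homeomorphisms on a compact Hausdorff space X, with the action Lyapunov stable. If x₁, x₂ ∈ X lie in the closure of the same orbit (i.e., x₂ ∈ closure(Γ•x₁)), then for every continuous φ : X → ℂ and every ε > 0 there exists g ∈ Γ such that |φ(h•x₁) − φ(h·g•x₂)| < ε for all h ∈ Γ. Consequently, any Γ-invariant mean applied to the functions φ_{x₁}(g) = φ(g•x₁) and φ_{x₂}(g) = φ(g•x₂) yields the same value; the average is constant on closures of orbits. -/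
/-!
Part one is Lyapunov stability applied at a point `k • x₁` of the orbit close to `x₂`.

For the means, let `Γ` act on `C(X, ℂ)` by precomposition. By Lyapunov stability the orbit of `φ`
is uniformly equicontinuous, hence totally bounded (Arzelà–Ascoli), and the action is isometric.
Kakutani's averaging argument then yields, in the convex hull of the orbit, a function `χ` moved
by less than `δ` by every group element; such a `χ` varies by at most `δ` on the orbit closure of
`x₁`. A left-invariant mean gives `χ` and `φ` the same average along every orbit, and the average
of `χ` along the orbit of any point of the orbit closure of `x₁` is within `δ` of `χ x₁`.
-/

open Set Metric

section AlmostFixedPoint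

variable {E : Type*} [NormedAddCommGroup E] [NormedSpace ℝ E]

theorem norm_inv_card_smul_sum_sub_le {ι : Type*} {t : Finset ι} {i₀ : ι} (hi₀ : i₀ ∈ t)
    {w : ι → E} {y : E} {d s : ℝ} (hs : ‖w i₀ - y‖ ≤ s) (hd : ∀ i ∈ t, ‖w i - y‖ ≤ d) :
    ‖(t.card : ℝ)⁻¹ • ∑ i ∈ t, w i - y‖ ≤ d - (d - s) / t.card := by
  classical
  have hN : (0 : ℝ) < t.card := by exact_mod_cast Finset.card_pos.2 ⟨i₀, hi₀⟩
  have hsplit : (t.card : ℝ)⁻¹ • ∑ i ∈ t, w i - y = (t.card : ℝ)⁻¹ • ∑ i ∈ t, (w i - y) := by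
    rw [Finset.sum_sub_distrib, smul_sub, Finset.sum_const, ← Nat.cast_smul_eq_nsmul ℝ,
      smul_smul, inv_mul_cancel₀ hN.ne', one_smul]
  have hsum : ∑ i ∈ t, ‖w i - y‖ ≤ s + (t.card - 1) * d := by
    rw [← Finset.add_sum_erase t _ hi₀]
    refine add_le_add hs ((Finset.sum_le_card_nsmul _ _ d fun i hi => hd i
      (Finset.mem_of_mem_erase hi)).trans_eq ?_)
    rw [Finset.card_erase_of_mem hi₀, nsmul_eq_mul, Nat.cast_pred (Finset.card_pos.2 ⟨i₀, hi₀⟩)]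
  calc ‖(t.card : ℝ)⁻¹ • ∑ i ∈ t, w i - y‖
      ≤ (t.card : ℝ)⁻¹ * ∑ i ∈ t, ‖w i - y‖ := by
        rw [hsplit, norm_smul, Real.norm_of_nonneg (inv_nonneg.2 hN.le)]
        gcongr
        exact norm_sum_le _ _
    _ ≤ (t.card : ℝ)⁻¹ * (s + (t.card - 1) * d) := by gcongr
    _ = d - (d - s) / t.card := by field_simp; ring

variable {G : Type*} [Group G] [MulAction G E] [IsIsometricSMul G E]

theorem exists_dist_smul_le_of_finset_cover {K : Set E} {t : Finset E} {δ : ℝ} (hδ : 0 < δ)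
    (ht : ∀ y ∈ K, ∃ p ∈ t, ‖y - p‖ ≤ δ / 4) (n : ℕ) {D : Set E} (hDK : D ⊆ K)
    (hD : D.Nonempty) (hDc : Convex ℝ D) (hDG : ∀ g : G, ∀ x ∈ D, g • x ∈ D)
    (hDdiam : ∀ x ∈ D, ∀ y ∈ D, dist x y ≤ δ + n * (δ / (2 * t.card))) :
    ∃ h ∈ D, ∀ g : G, dist (g • h) h ≤ δ := by
  set η := δ / (2 * t.card)
  induction n generalizing D with
  | zero =>
    obtain ⟨h, hh⟩ := hD
    exact ⟨h, hh, fun g => by simpa using hDdiam _ (hDG g h hh) _ hh⟩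
  | succ n ih =>
    have hw : ∀ p, ∃ w ∈ D, (∃ x ∈ D, ‖x - p‖ ≤ δ / 4) → ‖w - p‖ ≤ δ / 4 := by
      intro p
      by_cases hp : ∃ x ∈ D, ‖x - p‖ ≤ δ / 4
      · obtain ⟨x, hx, hxp⟩ := hp
        exact ⟨x, hx, fun _ => hxp⟩
      · obtain ⟨x, hx⟩ := hD
        exact ⟨x, hx, fun h => absurd h hp⟩
    choose w hwD hwp using hw
    obtain ⟨y₀, hy₀⟩ := hD
    obtain ⟨p₀, hp₀, -⟩ := ht y₀ (hDK hy₀)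
    have hN : (0 : ℝ) < t.card := by exact_mod_cast Finset.card_pos.2 ⟨p₀, hp₀⟩
    set c := (t.card : ℝ)⁻¹ • ∑ p ∈ t, w p
    -- Kakutani's averaging trick: `c` averages points of `D` chosen near each point of the net,
    -- so it is `η`-closer to every point of `D` than the diameter bound; `D` shrinks to `D'`.
    have hc : ∀ y ∈ D, dist c y ≤ δ + n * η := by
      intro y hy
      obtain ⟨p, hp, hyp⟩ := ht y (hDK hy)
      have hwy : ‖w p - y‖ ≤ δ / 2 := by
        calc ‖w p - y‖ ≤ ‖w p - p‖ + ‖y - p‖ := by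
              simpa only [dist_eq_norm] using dist_triangle_right (w p) y p
          _ ≤ δ / 4 + δ / 4 := add_le_add (hwp p ⟨y, hy, hyp⟩) hyp
          _ = δ / 2 := by ring
      rw [dist_eq_norm]
      refine (norm_inv_card_smul_sum_sub_le hp hwy fun q _ =>
        (dist_eq_norm (w q) y) ▸ hDdiam _ (hwD q) _ hy).trans ?_
      have hη : η = δ / 2 / t.card := by rw [div_div]
      have : δ / 2 / t.card ≤ (δ + (n + 1 : ℕ) * η - δ / 2) / t.card := by
        gcongr
        have : 0 ≤ ((n + 1 : ℕ) : ℝ) * η := by positivity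
        linarith
      push_cast at this ⊢
      linarith
    have hcD : c ∈ D := by
      simp only [c, Finset.smul_sum]
      exact hDc.sum_mem (fun _ _ => inv_nonneg.2 hN.le) (by simp [hN.ne']) fun p _ => hwD p
    set D' := D ∩ ⋂ y ∈ D, closedBall y (δ + n * η)
    refine (ih (D := D') (inter_subset_left.trans hDK) ⟨c, hcD, mem_iInter₂.2 hc⟩
      (hDc.inter (convex_iInter₂ fun y _ => convex_closedBall y _)) ?_ ?_).imp
      fun h hh => ⟨hh.1.1, hh.2⟩
    · rintro g x ⟨hxD, hx⟩
      refine ⟨hDG g x hxD, mem_iInter₂.2 fun y hy => ?_⟩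
      rw [mem_closedBall, ← smul_inv_smul g y, dist_smul]
      exact mem_iInter₂.1 hx _ (hDG g⁻¹ y hy)
    · rintro x ⟨-, hx⟩ y ⟨hy, -⟩
      exact mem_iInter₂.1 hx y hy

end AlmostFixedPoint

theorem exists_mem_convexHull_orbit_dist_smul_le {G E : Type*} [Group G] [NormedAddCommGroup E]
    [NormedSpace ℝ E] [DistribMulAction G E] [SMulCommClass G ℝ E] [IsIsometricSMul G E] {v : E}
    (hv : TotallyBounded (MulAction.orbit G v)) {δ : ℝ} (hδ : 0 < δ) :
    ∃ h ∈ convexHull ℝ (MulAction.orbit G v), ∀ g : G, dist (g • h) h ≤ δ := by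
  set K := convexHull ℝ (MulAction.orbit G v)
  have hKG : ∀ g : G, ∀ x ∈ K, g • x ∈ K := fun g =>
    convexHull_min (fun _ ⟨h, hh⟩ => subset_convexHull ℝ _ ⟨g * h, by simp only [← hh, mul_smul]⟩)
      ((convex_convexHull ℝ _).linear_preimage (DistribSMul.toLinearMap ℝ E g))
  have hK : TotallyBounded K := totallyBounded_convexHull.2 hv
  obtain ⟨C, hC⟩ := isBounded_iff.1 hK.isBounded
  obtain ⟨t, ht, hKt⟩ := totallyBounded_iff.1 hK (δ / 4) (by positivity)
  have hnet : ∀ y ∈ K, ∃ p ∈ ht.toFinset, ‖y - p‖ ≤ δ / 4 := fun y hy => by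
    obtain ⟨p, hp, hyp⟩ := mem_iUnion₂.1 (hKt hy)
    exact ⟨p, ht.mem_toFinset.2 hp, (mem_ball_iff_norm.1 hyp).le⟩
  have hvK : v ∈ K := subset_convexHull ℝ _ (MulAction.mem_orbit_self v)
  obtain ⟨p₀, hp₀, -⟩ := hnet v hvK
  have hN : (0 : ℝ) < ht.toFinset.card := by exact_mod_cast Finset.card_pos.2 ⟨p₀, hp₀⟩
  obtain ⟨n, hn⟩ := exists_nat_ge (C / (δ / (2 * ht.toFinset.card)))
  refine exists_dist_smul_le_of_finset_cover hδ hnet n subset_rfl ⟨v, hvK⟩ (convex_convexHull ℝ _)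
    hKG fun x hx y hy => ?_
  rw [div_le_iff₀ (by positivity)] at hn
  linarith [hC hx hy]

namespace ContinuousMap

section DomMulAct

variable {M X Y : Type*} [TopologicalSpace X] [TopologicalSpace Y]

instance instSMulDomMulAct [SMul M X] [ContinuousConstSMul M X] : SMul Mᵈᵐᵃ C(X, Y) where
  smul c f := f.comp ⟨(DomMulAct.mk.symm c • ·), continuous_const_smul _⟩

@[simp]
theorem domMulAct_smul_apply [SMul M X] [ContinuousConstSMul M X] (c : Mᵈᵐᵃ) (f : C(X, Y))
    (x : X) : (c • f) x = f (DomMulAct.mk.symm c • x) :=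
  rfl

variable [Monoid M] [MulAction M X] [ContinuousConstSMul M X]

instance : MulAction Mᵈᵐᵃ C(X, Y) where
  one_smul f := ext fun x => by simp
  mul_smul c d f := ext fun x => by simp [mul_smul]

instance [AddMonoid Y] [ContinuousAdd Y] : DistribMulAction Mᵈᵐᵃ C(X, Y) where
  smul_zero c := ext fun x => by simp
  smul_add c f g := ext fun x => by simp

instance {R : Type*} [SMul R Y] [ContinuousConstSMul R Y] : SMulCommClass Mᵈᵐᵃ R C(X, Y) where
  smul_comm c r f := ext fun x => by simp

end DomMulAct

variable {M X Y : Type*} [TopologicalSpace X] [CompactSpace X] [PseudoMetricSpace Y]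

theorem dist_domMulAct_smul_le [Monoid M] [MulAction M X] [ContinuousConstSMul M X] (c : Mᵈᵐᵃ)
    (f g : C(X, Y)) :
    dist (c • f) (c • g) ≤ dist f g :=
  (dist_le dist_nonneg).2 fun x => by
    simpa using dist_apply_le_dist (f := f) (g := g) (DomMulAct.mk.symm c • x)

instance [Group M] [MulAction M X] [ContinuousConstSMul M X] : IsIsometricSMul Mᵈᵐᵃ C(X, Y) where
  isometry_smul c := Isometry.of_dist_eq fun f g => (dist_domMulAct_smul_le c f g).antisymm <| by
    simpa [inv_smul_smul] using dist_domMulAct_smul_le c⁻¹ (c • f) (c • g)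

end ContinuousMap

section LyapunovStable

variable {Γ X : Type*} [UniformSpace X] [CompactSpace X]

theorem totallyBounded_orbit_domMulAct [Monoid Γ] [MulAction Γ X] [ContinuousConstSMul Γ X]
    {Y : Type*} [MetricSpace Y]
    (hΓ : UniformEquicontinuous fun g : Γ => (g • · : X → X)) (φ : C(X, Y)) :
    TotallyBounded (MulAction.orbit Γᵈᵐᵃ φ) := by
  set e := ContinuousMap.isometryEquivBoundedOfCompact X Y
  have hφΓ : UniformEquicontinuous fun g : Γ => φ ∘ (g • ·) := fun U hU =>
    hΓ _ (CompactSpace.uniformContinuous_of_continuous φ.continuous hU)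
  have hcompact : IsCompact (closure (e '' MulAction.orbit Γᵈᵐᵃ φ)) := by
    refine BoundedContinuousFunction.arzela_ascoli (range φ) (isCompact_range φ.continuous) _ ?_ ?_
    · rintro _ x ⟨_, ⟨c, rfl⟩, rfl⟩
      exact ⟨_, rfl⟩
    · intro x₀ U hU
      filter_upwards [hφΓ.equicontinuous x₀ U hU] with x hx
      rintro ⟨_, ⟨_, ⟨c, rfl⟩, rfl⟩⟩
      exact hx (DomMulAct.mk.symm c)
  exact (totallyBounded_image_iff e.isometry.isUniformInducing).1 <|
    hcompact.totallyBounded.subset subset_closure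

theorem exists_forall_dist_apply_smul_mul_lt [Group Γ] [MulAction Γ X] {Y : Type*}
    [PseudoMetricSpace Y] (hΓ : UniformEquicontinuous fun g : Γ => (g • · : X → X)) {x₁ x₂ : X}
    (hx : x₂ ∈ closure (MulAction.orbit Γ x₁)) (φ : C(X, Y)) {ε : ℝ} (hε : 0 < ε) :
    ∃ g : Γ, ∀ h : Γ, dist (φ (h • x₁)) (φ ((h * g) • x₂)) < ε := by
  have hU : {p : X × X | dist (φ p.1) (φ p.2) < ε} ∈ uniformity X :=
    CompactSpace.uniformContinuous_of_continuous φ.continuous (dist_mem_uniformity hε)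
  have hnear : ∀ᶠ y in nhds x₂, ∀ g : Γ, dist (φ (g • y)) (φ (g • x₂)) < ε := by
    rw [nhds_eq_comap_uniformity']
    exact (hΓ _ hU).comap _
  obtain ⟨_, ⟨k, rfl⟩, hk⟩ := ((mem_closure_iff_frequently.1 hx).and_eventually hnear).exists
  refine ⟨k⁻¹, fun h => ?_⟩
  simpa [mul_smul] using hk (h * k⁻¹)

end LyapunovStable

structure IsLeftInvariantMean {Γ : Type*} [Mul Γ] (M : (Γ → ℂ) → ℂ) : Prop where
  map_add : ∀ f₁ f₂ : Γ → ℂ, (∃ C, ∀ g, ‖f₁ g‖ ≤ C) → (∃ C, ∀ g, ‖f₂ g‖ ≤ C) →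
    M (f₁ + f₂) = M f₁ + M f₂
  map_smul : ∀ (c : ℂ) (f : Γ → ℂ), (∃ C, ∀ g, ‖f g‖ ≤ C) → M (c • f) = c * M f
  map_one : M (fun _ => 1) = 1
  norm_le : ∀ (f : Γ → ℂ) (C : ℝ), (∀ g, ‖f g‖ ≤ C) → ‖M f‖ ≤ C
  map_mul_left : ∀ (f : Γ → ℂ) (h : Γ), (∃ C, ∀ g, ‖f g‖ ≤ C) → M (fun g => f (h * g)) = M f

namespace IsLeftInvariantMean

variable {Γ : Type*} [Mul Γ] {M : (Γ → ℂ) → ℂ} (hM : IsLeftInvariantMean M)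
include hM

theorem map_const (c : ℂ) : M (fun _ => c) = c := by
  calc M (fun _ => c) = M (c • fun _ => 1) := by congr; ext; simp
    _ = c := by rw [hM.map_smul c _ ⟨1, fun _ => by simp⟩, hM.map_one, mul_one]

theorem norm_sub_le_of_forall_norm_sub_le {f : Γ → ℂ} (hf : ∃ C, ∀ g, ‖f g‖ ≤ C) {c : ℂ} {ε : ℝ}
    (hfc : ∀ g, ‖f g - c‖ ≤ ε) : ‖M f - c‖ ≤ ε := by
  obtain ⟨C, hC⟩ := hf
  have hsplit := hM.map_add (fun g => f g - c) (fun _ => c)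
    ⟨C + ‖c‖, fun g => (norm_sub_le _ _).trans (add_le_add (hC g) le_rfl)⟩ ⟨‖c‖, fun _ => le_rfl⟩
  rw [show ((fun g => f g - c) + fun _ => c) = f by ext; simp, hM.map_const] at hsplit
  rw [hsplit, add_sub_cancel_right]
  exact hM.norm_le _ ε hfc

end IsLeftInvariantMean

section OrbitMean

variable {Γ X : Type*} [TopologicalSpace X] [CompactSpace X]

theorem ContinuousMap.exists_forall_norm_apply_smul_le [SMul Γ X] (χ : C(X, ℂ)) (x : X) :
    ∃ C, ∀ g : Γ, ‖χ (g • x)‖ ≤ C :=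
  ⟨‖χ‖, fun _ => χ.norm_coe_le_norm _⟩

theorem dist_apply_le_of_mem_closure_orbit [Monoid Γ] [MulAction Γ X] [ContinuousConstSMul Γ X]
    {Y : Type*} [PseudoMetricSpace Y] {χ : C(X, Y)} {δ : ℝ}
    (hχ : ∀ c : Γᵈᵐᵃ, dist (c • χ) χ ≤ δ) {x y : X}
    (hy : y ∈ closure (MulAction.orbit Γ x)) : dist (χ y) (χ x) ≤ δ := by
  refine closure_minimal ?_ (isClosed_le (χ.continuous.dist continuous_const) continuous_const) hy
  rintro _ ⟨g, rfl⟩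
  simpa using (ContinuousMap.dist_apply_le_dist x).trans (hχ (DomMulAct.mk g))

namespace IsLeftInvariantMean

variable [Monoid Γ] [MulAction Γ X] {M : (Γ → ℂ) → ℂ} (hM : IsLeftInvariantMean M)

noncomputable def orbitMean (x : X) : C(X, ℂ) →ₗ[ℂ] ℂ where
  toFun χ := M fun g => χ (g • x)
  map_add' χ χ' := hM.map_add _ _ (χ.exists_forall_norm_apply_smul_le x)
    (χ'.exists_forall_norm_apply_smul_le x)
  map_smul' c χ := hM.map_smul c _ (χ.exists_forall_norm_apply_smul_le x)

theorem orbitMean_apply (x : X) (χ : C(X, ℂ)) : hM.orbitMean x χ = M fun g => χ (g • x) :=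
  rfl

variable [ContinuousConstSMul Γ X]

theorem orbitMean_domMulAct_smul (x : X) (c : Γᵈᵐᵃ) (χ : C(X, ℂ)) :
    hM.orbitMean x (c • χ) = hM.orbitMean x χ := by
  simpa [orbitMean_apply, mul_smul] using
    hM.map_mul_left _ (DomMulAct.mk.symm c) (χ.exists_forall_norm_apply_smul_le x)

theorem orbitMean_eq_of_mem_convexHull (x : X) {φ χ : C(X, ℂ)}
    (hχ : χ ∈ convexHull ℝ (MulAction.orbit Γᵈᵐᵃ φ)) : hM.orbitMean x χ = hM.orbitMean x φ := by
  refine convexHull_min ?_ ((convex_singleton _).linear_preimage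
    ((hM.orbitMean x).restrictScalars ℝ)) hχ
  rintro _ ⟨c, rfl⟩
  exact hM.orbitMean_domMulAct_smul x c φ

theorem norm_orbitMean_sub_le {χ : C(X, ℂ)} {δ : ℝ} (hχ : ∀ c : Γᵈᵐᵃ, dist (c • χ) χ ≤ δ)
    {x y : X} (hy : y ∈ closure (MulAction.orbit Γ x)) : ‖hM.orbitMean y χ - χ x‖ ≤ δ :=
  hM.norm_sub_le_of_forall_norm_sub_le (χ.exists_forall_norm_apply_smul_le y) fun g => by
    rw [← dist_eq_norm]
    exact dist_apply_le_of_mem_closure_orbit hχ (smul_closure_orbit_subset g x ⟨y, hy, rfl⟩)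

end IsLeftInvariantMean

end OrbitMean

theorem stmt3_general {Γ X : Type*} [Group Γ] [UniformSpace X] [CompactSpace X]
    [MulAction Γ X] [ContinuousConstSMul Γ X]
    (hLyap : ∀ U ∈ uniformity X, ∃ V ∈ uniformity X,
      ∀ (g : Γ) (x y : X), (x, y) ∈ V → (g • x, g • y) ∈ U)
    (x₁ x₂ : X) (hx : x₂ ∈ closure (MulAction.orbit Γ x₁)) (φ : C(X, ℂ)) :
    (∀ ε > 0, ∃ g : Γ, ∀ h : Γ, ‖φ (h • x₁) - φ ((h * g) • x₂)‖ < ε) ∧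
    ∀ M : (Γ → ℂ) → ℂ,
      (∀ f₁ f₂ : Γ → ℂ, (∃ C, ∀ g, ‖f₁ g‖ ≤ C) → (∃ C, ∀ g, ‖f₂ g‖ ≤ C) →
        M (f₁ + f₂) = M f₁ + M f₂) →
      (∀ (c : ℂ) (f : Γ → ℂ), (∃ C, ∀ g, ‖f g‖ ≤ C) → M (c • f) = c * M f) →
      (M (fun _ => 1) = 1) →
      (∀ (f : Γ → ℂ) (C : ℝ), (∀ g, ‖f g‖ ≤ C) → ‖M f‖ ≤ C) →
      (∀ (f : Γ → ℂ) (h : Γ), (∃ C, ∀ g, ‖f g‖ ≤ C) → M (fun g => f (h * g)) = M f) →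
      M (fun g => φ (g • x₁)) = M (fun g => φ (g • x₂)) := by
  have hΓ : UniformEquicontinuous fun g : Γ => (g • · : X → X) := fun U hU => by
    obtain ⟨V, hV, hVU⟩ := hLyap U hU
    exact Filter.mem_of_superset hV fun p hp g => hVU g p.1 p.2 hp
  refine ⟨fun ε hε => ?_, fun M hadd hsmul hone hbound hinv => ?_⟩
  · simpa only [dist_eq_norm] using exists_forall_dist_apply_smul_mul_lt hΓ hx φ hε
  have hM : IsLeftInvariantMean M := ⟨hadd, hsmul, hone, hbound, hinv⟩
  refine eq_of_forall_dist_le fun ε hε => ?_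
  obtain ⟨χ, hχφ, hχ⟩ := exists_mem_convexHull_orbit_dist_smul_le
    (totallyBounded_orbit_domMulAct hΓ φ) (half_pos hε)
  have h₁ := hM.norm_orbitMean_sub_le hχ (subset_closure (MulAction.mem_orbit_self x₁))
  have h₂ := hM.norm_orbitMean_sub_le hχ hx
  rw [hM.orbitMean_eq_of_mem_convexHull _ hχφ, IsLeftInvariantMean.orbitMean_apply,
    ← dist_eq_norm] at h₁ h₂
  linarith [dist_triangle_right (M fun g => φ (g • x₁)) (M fun g => φ (g • x₂)) (χ x₁)]

/-- For a Lyapunov stable action on a compact Hausdorff space, if `x₂` lies in the closure of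
the orbit of `x₁`, then `φ_{x₂}` is, up to a shift, uniformly close to `φ_{x₁}`; consequently
every left-invariant mean on bounded functions on `Γ` gives `φ_{x₁}` and `φ_{x₂}` the same
average. -/
theorem stmt3 {Γ X : Type*} [Group Γ] [UniformSpace X] [CompactSpace X] [T2Space X]
    [MulAction Γ X] [ContinuousConstSMul Γ X]
    (hLyap : ∀ U ∈ uniformity X, ∃ V ∈ uniformity X,
      ∀ (g : Γ) (x y : X), (x, y) ∈ V → (g • x, g • y) ∈ U)
    (x₁ x₂ : X) (hx : x₂ ∈ closure (MulAction.orbit Γ x₁)) (φ : C(X, ℂ)) :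
    (∀ ε > 0, ∃ g : Γ, ∀ h : Γ, ‖φ (h • x₁) - φ ((h * g) • x₂)‖ < ε) ∧
    ∀ M : (Γ → ℂ) → ℂ,
      (∀ f₁ f₂ : Γ → ℂ, (∃ C, ∀ g, ‖f₁ g‖ ≤ C) → (∃ C, ∀ g, ‖f₂ g‖ ≤ C) →
        M (f₁ + f₂) = M f₁ + M f₂) →
      (∀ (c : ℂ) (f : Γ → ℂ), (∃ C, ∀ g, ‖f g‖ ≤ C) → M (c • f) = c * M f) →
      (M (fun _ => 1) = 1) →
      (∀ (f : Γ → ℂ) (C : ℝ), (∀ g, ‖f g‖ ≤ C) → ‖M f‖ ≤ C) →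
      (∀ (f : Γ → ℂ) (h : Γ), (∃ C, ∀ g, ‖f g‖ ≤ C) → M (fun g => f (h * g)) = M f) →
      M (fun g => φ (g • x₁)) = M (fun g => φ (g • x₂)) :=
  stmt3_general hLyap x₁ x₂ hx φ
end

section
/- Let a group Γ act by homeomorphisms on a compact Hausdorff space X, with the action Lyapunov stable. Then any two orbits either have equal closures or disjoint closures: for x, y ∈ X, either closure(Γ•x) = closure(Γ•y) or closure(Γ•x) ∩ closure(Γ•y) = ∅. -/
open Filter Uniformity UniformSpace Pointwise

section OrbitClosure

variable {Γ X : Type*}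

theorem uniformEquicontinuous_smul_iff [Monoid Γ] [UniformSpace X] [MulAction Γ X] :
    UniformEquicontinuous (fun g : Γ ↦ (g • · : X → X)) ↔
      ∀ U ∈ 𝓤 X, ∃ V ∈ 𝓤 X, ∀ (g : Γ) (x y : X), (x, y) ∈ V → (g • x, g • y) ∈ U :=
  forall₂_congr fun _ _ ↦ ⟨fun h ↦ ⟨_, h, fun g _ _ hxy ↦ hxy g⟩,
    fun ⟨_, hV, h⟩ ↦ mem_of_superset hV fun p hp g ↦ h g p.1 p.2 hp⟩

theorem closure_orbit_subset_of_mem [Monoid Γ] [TopologicalSpace X] [MulAction Γ X]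
    [ContinuousConstSMul Γ X] {y z : X} (hz : z ∈ closure (MulAction.orbit Γ y)) :
    closure (MulAction.orbit Γ z) ⊆ closure (MulAction.orbit Γ y) :=
  closure_minimal (by
    rintro _ ⟨g, rfl⟩
    exact smul_closure_orbit_subset g y (Set.smul_mem_smul_set hz)) isClosed_closure

/-- Equicontinuity lets us transport "`g • x` is close to `z`" back by `g⁻¹` to
"`x` is close to `g⁻¹ • z`". -/
theorem mem_closure_orbit_symm [Group Γ] [UniformSpace X] [MulAction Γ X]
    (hΓ : UniformEquicontinuous (fun g : Γ ↦ (g • · : X → X))) {x z : X}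
    (hz : z ∈ closure (MulAction.orbit Γ x)) : x ∈ closure (MulAction.orbit Γ z) := by
  rw [mem_closure_iff_ball]
  intro U hU
  obtain ⟨V, hV, hVU⟩ := (uniformEquicontinuous_smul_iff.mp hΓ) _ (symm_le_uniformity hU)
  obtain ⟨_, hzgx, g, rfl⟩ := mem_closure_iff_ball.mp hz hV
  refine ⟨g⁻¹ • z, ?_, g⁻¹, rfl⟩
  have := hVU g⁻¹ _ _ hzgx
  rwa [inv_smul_smul] at this

theorem closure_orbit_eq_of_mem [Group Γ] [UniformSpace X] [MulAction Γ X]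
    [ContinuousConstSMul Γ X] (hΓ : UniformEquicontinuous (fun g : Γ ↦ (g • · : X → X)))
    {x z : X} (hz : z ∈ closure (MulAction.orbit Γ x)) :
    closure (MulAction.orbit Γ z) = closure (MulAction.orbit Γ x) :=
  (closure_orbit_subset_of_mem hz).antisymm
    (closure_orbit_subset_of_mem (mem_closure_orbit_symm hΓ hz))

end OrbitClosure

theorem stmt4_general {Γ X : Type*} [Group Γ] [UniformSpace X]
    [MulAction Γ X] [ContinuousConstSMul Γ X]
    (hLyap : ∀ U ∈ uniformity X, ∃ V ∈ uniformity X,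
      ∀ (g : Γ) (x y : X), (x, y) ∈ V → (g • x, g • y) ∈ U)
    (x y : X) :
    closure (MulAction.orbit Γ x) = closure (MulAction.orbit Γ y) ∨
      closure (MulAction.orbit Γ x) ∩ closure (MulAction.orbit Γ y) = ∅ := by
  have hΓ := uniformEquicontinuous_smul_iff.mpr hLyap
  rcases Set.eq_empty_or_nonempty
      (closure (MulAction.orbit Γ x) ∩ closure (MulAction.orbit Γ y)) with h | ⟨z, hzx, hzy⟩
  · exact Or.inr h
  · exact Or.inl ((closure_orbit_eq_of_mem hΓ hzx).symm.trans (closure_orbit_eq_of_mem hΓ hzy))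

/-- Orbit-closure dichotomy for Lyapunov stable actions on compact Hausdorff spaces:
any two orbits have either equal or disjoint closures. -/
theorem stmt4 {Γ X : Type*} [Group Γ] [UniformSpace X] [CompactSpace X] [T2Space X]
    [MulAction Γ X] [ContinuousConstSMul Γ X]
    (hLyap : ∀ U ∈ uniformity X, ∃ V ∈ uniformity X,
      ∀ (g : Γ) (x y : X), (x, y) ∈ V → (g • x, g • y) ∈ U)
    (x y : X) :
    closure (MulAction.orbit Γ x) = closure (MulAction.orbit Γ y) ∨
      closure (MulAction.orbit Γ x) ∩ closure (MulAction.orbit Γ y) = ∅ :=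
  stmt4_general hLyap x y
end

section
/- Let a group Γ act by homeomorphisms on a compact Hausdorff space X, Lyapunov stably. Then the quotient space X/∼, where x ∼ y iff closure(Γ•x) = closure(Γ•y), equipped with the quotient topology, is Hausdorff. -/
/-!
Uniform equicontinuity of the action makes the relation `y ∈ closure (Γ • x)` symmetric and
closed in `X × X`. Symmetry identifies it with the relation "equal orbit closures", and makes the
saturation of an open set `U` equal to `⋃ g, g⁻¹ • U`, so the quotient map is open. An open
quotient map with closed graph relation has a Hausdorff target.
-/

/-- The equivalence relation identifying points with equal orbit closures. -/
def orbitClosureSetoid (Γ X : Type*) [Group Γ] [MulAction Γ X] [TopologicalSpace X] :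
    Setoid X :=
  ⟨fun x y => closure (MulAction.orbit Γ x) = closure (MulAction.orbit Γ y),
    ⟨fun _ => rfl, Eq.symm, Eq.trans⟩⟩

open MulAction Set Filter UniformSpace

theorem closure_orbit_subset_of_mem_s5 {M X : Type*} [Monoid M] [TopologicalSpace X] [MulAction M X]
    [ContinuousConstSMul M X] {x y : X} (hy : y ∈ closure (orbit M x)) :
    closure (orbit M y) ⊆ closure (orbit M x) :=
  closure_minimal (fun _ ⟨g, hg⟩ => hg ▸ smul_closure_orbit_subset g x (smul_mem_smul_set hy))
    isClosed_closure

section OrbitClosureQuotient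

variable {Γ X : Type*} [Group Γ] [TopologicalSpace X] [MulAction Γ X] [ContinuousConstSMul Γ X]

theorem orbitClosureSetoid_iff
    (hsymm : ∀ x y : X, y ∈ closure (orbit Γ x) → x ∈ closure (orbit Γ y)) {x y : X} :
    orbitClosureSetoid Γ X x y ↔ y ∈ closure (orbit Γ x) := by
  refine ⟨fun h => ?_, fun h => ?_⟩
  · exact (h ▸ subset_closure (mem_orbit_self y) : y ∈ closure (orbit Γ x))
  · exact (closure_orbit_subset_of_mem_s5 (hsymm x y h)).antisymm (closure_orbit_subset_of_mem_s5 h)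

theorem isOpenQuotientMap_orbitClosureSetoid
    (hsymm : ∀ x y : X, y ∈ closure (orbit Γ x) → x ∈ closure (orbit Γ y)) :
    IsOpenQuotientMap (Quotient.mk (orbitClosureSetoid Γ X)) := by
  refine ⟨Quot.mk_surjective, continuous_quot_mk, fun U hU => ?_⟩
  have hsaturation : Quotient.mk (orbitClosureSetoid Γ X) ⁻¹' (Quotient.mk _ '' U) =
      ⋃ g : Γ, (g • ·) ⁻¹' U := by
    ext z
    simp only [mem_preimage, mem_image, Quotient.eq, orbitClosureSetoid_iff hsymm, mem_iUnion]
    constructor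
    · rintro ⟨a, ha, hz⟩
      obtain ⟨_, hgz, g, rfl⟩ := mem_closure_iff.1 (hsymm a z hz) U hU ha
      exact ⟨g, hgz⟩
    · rintro ⟨g, hgz⟩
      refine ⟨g • z, hgz, ?_⟩
      rw [orbit_smul]
      exact subset_closure (mem_orbit_self z)
  exact isQuotientMap_quotient_mk'.isOpen_preimage.1 <|
    hsaturation ▸ isOpen_iUnion fun g => hU.preimage (continuous_const_smul g)

theorem t2Space_quotient_orbitClosureSetoid
    (hsymm : ∀ x y : X, y ∈ closure (orbit Γ x) → x ∈ closure (orbit Γ y))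
    (hclosed : IsClosed {p : X × X | p.2 ∈ closure (orbit Γ p.1)}) :
    T2Space (Quotient (orbitClosureSetoid Γ X)) := by
  rw [t2Space_iff_of_isOpenQuotientMap (isOpenQuotientMap_orbitClosureSetoid hsymm)]
  simpa only [Quotient.eq, orbitClosureSetoid_iff hsymm] using hclosed

end OrbitClosureQuotient

section UniformEquicontinuousAction

variable {Γ X : Type*} [Group Γ] [UniformSpace X] [MulAction Γ X]

theorem mem_closure_orbit_symm_s5 (h : UniformEquicontinuous fun g : Γ => (g • · : X → X))
    {x y : X} (hy : y ∈ closure (orbit Γ x)) : x ∈ closure (orbit Γ y) := by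
  refine mem_closure_iff_symm_ball.2 fun {V} hV hVsymm => ?_
  obtain ⟨_, hgx, g, rfl⟩ := mem_closure_iff_ball.1 hy (h V hV)
  refine ⟨g⁻¹ • y, ⟨g⁻¹, rfl⟩, ?_⟩
  exact SetRel.symm V (by simpa using hgx g⁻¹)

theorem isClosed_setOf_mem_closure_orbit (h : UniformEquicontinuous fun g : Γ => (g • · : X → X)) :
    IsClosed {p : X × X | p.2 ∈ closure (orbit Γ p.1)} := by
  refine isClosed_of_closure_subset fun p hp => mem_closure_iff_ball.2 fun {V} hV => ?_
  obtain ⟨W, hW, -, hWV⟩ := comp_comp_symm_mem_uniformity_sets hV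
  have hW' := inter_mem hW (h W hW)
  obtain ⟨q, ⟨hq₁, hq₂⟩, hq⟩ := mem_closure_iff_nhds.1 hp _
    (prod_mem_nhds (mem_nhds_right p.1 hW') (mem_nhds_left p.2 hW'))
  obtain ⟨_, hgq, g, rfl⟩ := mem_closure_iff_ball.1 hq hW
  -- `p.2`, `q.2`, `g • q.1`, `g • p.1` are successively `W`-close, the last pair by equicontinuity
  exact ⟨g • p.1, hWV ⟨g • q.1, ⟨q.2, hq₂.1, hgq⟩, hq₁.2 g⟩, g, rfl⟩

end UniformEquicontinuousAction

theorem stmt5_general {Γ X : Type*} [Group Γ] [UniformSpace X]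
    [MulAction Γ X] [ContinuousConstSMul Γ X]
    (hLyap : ∀ U ∈ uniformity X, ∃ V ∈ uniformity X,
      ∀ (g : Γ) (x y : X), (x, y) ∈ V → (g • x, g • y) ∈ U) :
    T2Space (Quotient (orbitClosureSetoid Γ X)) := by
  have h : UniformEquicontinuous fun g : Γ => (g • · : X → X) := fun U hU =>
    let ⟨V, hV, hVU⟩ := hLyap U hU
    mem_of_superset hV fun p hp g => hVU g p.1 p.2 hp
  exact t2Space_quotient_orbitClosureSetoid (fun _ _ => mem_closure_orbit_symm_s5 h)
    (isClosed_setOf_mem_closure_orbit h)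

/-- For a Lyapunov stable action on a compact Hausdorff space, the quotient by the relation
"equal orbit closures", with the quotient topology, is Hausdorff. -/
theorem stmt5 {Γ X : Type*} [Group Γ] [UniformSpace X] [CompactSpace X] [T2Space X]
    [MulAction Γ X] [ContinuousConstSMul Γ X]
    (hLyap : ∀ U ∈ uniformity X, ∃ V ∈ uniformity X,
      ∀ (g : Γ) (x y : X), (x, y) ∈ V → (g • x, g • y) ∈ U) :
    T2Space (Quotient (orbitClosureSetoid Γ X)) :=
  stmt5_general hLyap
end

section
/- Let a group Γ act by homeomorphisms on a compact Hausdorff space X, Lyapunov stably, and suppose there is a uniform bound N on the cardinality of all finite orbits. Then the set X_f of all points with finite orbit is a closed (and Γ-invariant) subset of X. -/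
/-!
Lyapunov stability says the maps `x ↦ g • x` form a (uniformly) equicontinuous family. Distinct
points `g₁ • x, …, gₙ • x` of an orbit are separated by an entourage, so by equicontinuity the
points `g₁ • y, …, gₙ • y` are still distinct for `y` near `x`: the condition `n ≤ |Γ • x|` is
open. With the uniform bound, `X_f = {x | |Γ • x| ≤ N}`, the complement of such an open set.
-/

open Set Filter Topology Uniformity MulAction SetRel

theorem Set.Finite.compl_offDiag_mem_uniformity {X : Type*} [UniformSpace X] [T0Space X]
    {s : Set X} (hs : s.Finite) : s.offDiagᶜ ∈ 𝓤 X := by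
  have hsingle : ∀ p ∈ s.offDiag, {p}ᶜ ∈ 𝓤 X := by
    rintro ⟨a, b⟩ ⟨-, -, hab⟩
    by_contra hp
    exact hab (eq_of_uniformity fun hV => by_contra fun h => hp (mem_of_superset hV (by simpa)))
  have hcompl : s.offDiagᶜ = ⋂ p ∈ s.offDiag, {p}ᶜ := by
    rw [← compl_iUnion₂, biUnion_of_singleton]
  exact hcompl ▸ (biInter_mem hs.offDiag).2 hsingle

theorem eventually_smul_eq_imp_smul_eq {Γ X : Type*} [UniformSpace X] [T0Space X] [SMul Γ X]
    {x : X} (hx : EquicontinuousAt (fun g : Γ => (g • · : X → X)) x) {t : Set X}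
    (ht : t.Finite) :
    ∀ᶠ y in 𝓝 x, ∀ g h : Γ, g • x ∈ t → h • x ∈ t → g • y = h • y → g • x = h • x := by
  obtain ⟨W, hW, hWsymm, hWt⟩ := comp_symm_mem_uniformity_sets ht.compl_offDiag_mem_uniformity
  filter_upwards [hx W hW] with y hy g h hg hh hgh
  by_contra hne
  have hcomp : (g • x, h • x) ∈ W ○ W := ⟨g • y, hy g, hgh ▸ hWsymm.symm _ _ (hy h)⟩
  exact hWt hcomp ⟨hg, hh, hne⟩

theorem isOpen_setOf_natCast_le_encard_orbit {Γ X : Type*} [Monoid Γ] [UniformSpace X]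
    [T0Space X] [MulAction Γ X] (hΓ : Equicontinuous (fun g : Γ => (g • · : X → X))) (n : ℕ) :
    IsOpen {x : X | (n : ℕ∞) ≤ (orbit Γ x).encard} := by
  refine isOpen_iff_mem_nhds.2 fun x hx => ?_
  obtain ⟨t, hts, htn⟩ := exists_subset_encard_eq hx
  have ht : t.Finite := finite_of_encard_eq_coe htn
  choose! γ hγ using fun a (ha : a ∈ t) => mem_orbit_iff.1 (hts ha)
  filter_upwards [eventually_smul_eq_imp_smul_eq (hΓ x) ht] with y hy
  have hinj : InjOn (fun a => γ a • y) t := fun a ha b hb hab => by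
    simpa only [hγ a ha, hγ b hb] using
      hy (γ a) (γ b) ((hγ a ha).symm ▸ ha) ((hγ b hb).symm ▸ hb) hab
  calc (n : ℕ∞) = ((fun a => γ a • y) '' t).encard := by rw [hinj.encard_image, htn]
    _ ≤ (orbit Γ y).encard :=
      encard_le_encard (image_subset_iff.2 fun a _ => mem_orbit y (γ a))

theorem isClosed_setOf_encard_orbit_le {Γ X : Type*} [Monoid Γ] [UniformSpace X]
    [T0Space X] [MulAction Γ X] (hΓ : Equicontinuous (fun g : Γ => (g • · : X → X))) (n : ℕ) :
    IsClosed {x : X | (orbit Γ x).encard ≤ n} := by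
  convert (isOpen_setOf_natCast_le_encard_orbit hΓ (n + 1)).isClosed_compl using 1
  ext x
  simp only [mem_compl_iff, mem_ofPred_eq, not_le, Nat.cast_add, Nat.cast_one,
    ENat.lt_add_one_iff (ENat.natCast_ne_top n)]

theorem stmt6_general {Γ X : Type*} [Group Γ] [UniformSpace X] [T2Space X]
    [MulAction Γ X]
    (hLyap : ∀ U ∈ uniformity X, ∃ V ∈ uniformity X,
      ∀ (g : Γ) (x y : X), (x, y) ∈ V → (g • x, g • y) ∈ U)
    (N : ℕ)
    (hN : ∀ x : X, (MulAction.orbit Γ x).Finite → Nat.card (MulAction.orbit Γ x) ≤ N) :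
    IsClosed {x : X | (MulAction.orbit Γ x).Finite} ∧
      ∀ (g : Γ) (x : X), (MulAction.orbit Γ x).Finite → (MulAction.orbit Γ (g • x)).Finite := by
  have hΓ : UniformEquicontinuous (fun g : Γ => (g • · : X → X)) := fun U hU =>
    let ⟨V, hV, hVU⟩ := hLyap U hU
    mem_of_superset hV fun p hp g => hVU g p.1 p.2 hp
  have hfinite : {x : X | (orbit Γ x).Finite} = {x | (orbit Γ x).encard ≤ N} := by
    refine Set.ext fun x => ⟨fun (hx : (orbit Γ x).Finite) => ?_, finite_of_encard_le_coe⟩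
    change (orbit Γ x).encard ≤ N
    rw [← hx.cast_ncard_eq, ← Nat.card_coe_set_eq]
    exact_mod_cast hN x hx
  exact ⟨hfinite ▸ isClosed_setOf_encard_orbit_le hΓ.equicontinuous N,
    fun g x hx => by rwa [orbit_smul]⟩

/-- For a Lyapunov stable action on a compact Hausdorff space with a uniform bound `N` on the
cardinality of finite orbits, the set of points with finite orbit is closed and Γ-invariant. -/
theorem stmt6 {Γ X : Type*} [Group Γ] [UniformSpace X] [CompactSpace X] [T2Space X]
    [MulAction Γ X] [ContinuousConstSMul Γ X]
    (hLyap : ∀ U ∈ uniformity X, ∃ V ∈ uniformity X,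
      ∀ (g : Γ) (x y : X), (x, y) ∈ V → (g • x, g • y) ∈ U)
    (N : ℕ)
    (hN : ∀ x : X, (MulAction.orbit Γ x).Finite → Nat.card (MulAction.orbit Γ x) ≤ N) :
    IsClosed {x : X | (MulAction.orbit Γ x).Finite} ∧
      ∀ (g : Γ) (x : X), (MulAction.orbit Γ x).Finite → (MulAction.orbit Γ (g • x)).Finite :=
  stmt6_general hLyap N hN
end

section
/- Let a group Γ act by homeomorphisms on a compact Hausdorff space X, Lyapunov stably, and suppose the orbit of a point a ∈ X is dense in X. Then for every nonempty open set B ⊆ X, the union of the translates g•B over g ∈ Γ is all of X, and by compactness there exist finitely many g₁,…,g_n ∈ Γ with X = g₁•B ∪ … ∪ g_n•B. -/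
/-!
Under a Lyapunov stable (uniformly equicontinuous) action, a point in the orbit closure of `a` has
an orbit closure containing that of `a`; so one dense orbit makes every orbit dense. For a minimal
action every point has a translate in `B`, and compactness extracts a finite subcover.
-/

open Pointwise

namespace MulAction

variable {G X : Type*} [Group G] [UniformSpace X] [MulAction G X]

/-- If `g • a` is close to `x`, equicontinuity keeps every `h • a = (h * g⁻¹) • (g • a)` close to
`(h * g⁻¹) • x`. -/
theorem closure_orbit_subset_of_mem_closure_orbit
    (hF : UniformEquicontinuous fun g : G ↦ (g • · : X → X)) {a x : X}
    (hx : x ∈ closure (orbit G a)) : closure (orbit G a) ⊆ closure (orbit G x) := by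
  refine closure_minimal ?_ isClosed_closure
  rintro _ ⟨h, rfl⟩
  refine mem_closure_iff_nhds.2 fun t ht ↦ ?_
  obtain ⟨U, hU, hUt⟩ := UniformSpace.mem_nhds_iff.1 ht
  obtain ⟨_, hgU, g, rfl⟩ := mem_closure_iff_nhds.1 hx _ (mem_nhds_right x (hF U hU))
  have hclose : ((h * g⁻¹) • g • a, (h * g⁻¹) • x) ∈ U := hgU (h * g⁻¹)
  rw [smul_smul, inv_mul_cancel_right] at hclose
  exact ⟨_, hUt hclose, mem_orbit _ _⟩

theorem isMinimal_of_uniformEquicontinuous_of_dense_orbit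
    (hF : UniformEquicontinuous fun g : G ↦ (g • · : X → X)) {a : X}
    (ha : Dense (orbit G a)) : IsMinimal G X where
  dense_orbit x :=
    dense_closure.1 ((dense_closure.2 ha).mono (closure_orbit_subset_of_mem_closure_orbit hF (ha x)))

end MulAction

theorem stmt7_general {Γ X : Type*} [Group Γ] [UniformSpace X] [CompactSpace X]
    [MulAction Γ X] [ContinuousConstSMul Γ X]
    (hLyap : ∀ U ∈ uniformity X, ∃ V ∈ uniformity X,
      ∀ (g : Γ) (x y : X), (x, y) ∈ V → (g • x, g • y) ∈ U)
    (a : X) (ha : closure (MulAction.orbit Γ a) = Set.univ)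
    (B : Set X) (hBopen : IsOpen B) (hBne : B.Nonempty) :
    (⋃ g : Γ, g • B) = Set.univ ∧
      ∃ s : Finset Γ, (⋃ g ∈ s, g • B) = Set.univ := by
  have hF : UniformEquicontinuous fun g : Γ ↦ (g • · : X → X) := fun U hU ↦
    let ⟨V, hV, hVU⟩ := hLyap U hU
    Filter.mem_of_superset hV fun _ hxy g ↦ hVU g _ _ hxy
  have : MulAction.IsMinimal Γ X :=
    MulAction.isMinimal_of_uniformEquicontinuous_of_dense_orbit hF (dense_iff_closure_eq.2 ha)
  obtain ⟨s, hs⟩ := isCompact_univ.exists_finite_cover_smul Γ hBopen hBne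
  exact ⟨hBopen.iUnion_smul Γ hBne, s, Set.univ_subset_iff.1 hs⟩

/-- For a Lyapunov stable action on a compact Hausdorff space with a dense orbit, the translates
of any nonempty open set cover the whole space, and finitely many translates suffice. -/
theorem stmt7 {Γ X : Type*} [Group Γ] [UniformSpace X] [CompactSpace X] [T2Space X]
    [MulAction Γ X] [ContinuousConstSMul Γ X]
    (hLyap : ∀ U ∈ uniformity X, ∃ V ∈ uniformity X,
      ∀ (g : Γ) (x y : X), (x, y) ∈ V → (g • x, g • y) ∈ U)
    (a : X) (ha : closure (MulAction.orbit Γ a) = Set.univ)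
    (B : Set X) (hBopen : IsOpen B) (hBne : B.Nonempty) :
    (⋃ g : Γ, g • B) = Set.univ ∧
      ∃ s : Finset Γ, (⋃ g ∈ s, g • B) = Set.univ :=
  stmt7_general hLyap a ha B hBopen hBne
end

section
/- Let a group Γ act by homeomorphisms on a compact Hausdorff space X, Lyapunov stably, with a dense orbit. Then any two Γ-invariant regular Borel probability measures on X coincide. -/
/-!
Lyapunov stability says that the maps `x ↦ g • x` form a uniformly equicontinuous family, so their
pointwise closure `E ⊆ X → X` (the Ellis enveloping semigroup) is a compact monoid on which
evaluation and composition are jointly continuous. Its group of units is a compact group acting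
continuously on `X`, and its orbit through `a` is compact and contains the dense `Γ`-orbit, so this
action is transitive. A `Γ`-invariant measure `ρ` is invariant under all of `E`, because
`h ↦ ∫ f ∘ h ∂ρ` is continuous on `E` and constant on the dense image of `Γ`. Averaging over the
compact group with a Haar measure and swapping the integrals (Fubini) expresses `∫ f ∂ρ` as the
Haar average of `g ↦ f (g • a)`, which does not depend on `ρ`; regularity then turns equality of
integrals of continuous functions into equality of measures.
-/

open MeasureTheory Set Filter Topology Function MulAction

section Equicontinuity

variable {ι X α : Type*} [TopologicalSpace ι] [TopologicalSpace X] [UniformSpace α]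

theorem EquicontinuousAt.continuousAt_uncurry {F : ι → X → α} {i₀ : ι} {x₀ : X}
    (hF : EquicontinuousAt F x₀) (hc : ContinuousAt (fun i => F i x₀) i₀) :
    ContinuousAt (uncurry F) (i₀, x₀) := by
  rw [Uniform.continuousAt_iff'_right]
  intro U hU
  obtain ⟨V, hV, hVU⟩ := comp_mem_uniformity_sets hU
  have hi : ∀ᶠ i in 𝓝 i₀, (F i₀ x₀, F i x₀) ∈ V := Uniform.continuousAt_iff'_right.1 hc hV
  have hx : ∀ᶠ x in 𝓝 x₀, ∀ i, (F i x₀, F i x) ∈ V := hF V hV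
  rw [nhds_prod_eq]
  exact (hi.prod_mk hx).mono fun p hp => hVU ⟨_, hp.1, hp.2 p.1⟩

theorem Equicontinuous.continuous_uncurry {F : ι → X → α} (hF : Equicontinuous F)
    (hc : ∀ x, Continuous fun i => F i x) : Continuous (uncurry F) :=
  continuous_iff_continuousAt.2 fun p => (hF p.2).continuousAt_uncurry (hc p.2).continuousAt

end Equicontinuity

section ParametricIntegral

variable {ι P X E : Type*} [MeasurableSpace X] [NormedAddCommGroup E] [NormedSpace ℝ E]
  {μ : Measure X} [IsFiniteMeasure μ]

theorem TendstoUniformly.tendsto_integral {l : Filter ι} {F : ι → X → E} {f : X → E}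
    (hF : ∀ᶠ i in l, Integrable (F i) μ) (hf : Integrable f μ) (h : TendstoUniformly F f l) :
    Tendsto (fun i => ∫ x, F i x ∂μ) l (𝓝 (∫ x, f x ∂μ)) := by
  rw [Metric.tendsto_nhds]
  intro ε hε
  obtain ⟨δ, hδ, hδε⟩ : ∃ δ > 0, δ * μ.real univ < ε := by
    refine ⟨ε / (μ.real univ + 1), by positivity, ?_⟩
    rw [div_mul_eq_mul_div, div_lt_iff₀ (by positivity)]
    nlinarith
  filter_upwards [Metric.tendstoUniformly_iff.1 h δ hδ, hF] with i hi hFi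
  rw [dist_eq_norm, ← integral_sub hFi hf]
  refine (norm_integral_le_of_norm_le_const (C := δ) (.of_forall fun x => ?_)).trans_lt hδε
  rw [← dist_eq_norm, dist_comm]
  exact (hi x).le

theorem continuous_integral_of_continuous_uncurry [UniformSpace P] [WeaklyLocallyCompactSpace P]
    [UniformSpace X] [CompactSpace X] [OpensMeasurableSpace X]
    {F : P → X → E} (hF : Continuous (uncurry F)) : Continuous fun p => ∫ x, F p x ∂μ := by
  have hint : ∀ p, Integrable (F p) μ := fun p =>
    (hF.comp (Continuous.prodMk_right p)).integrable_of_hasCompactSupport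
      (.of_compactSpace _)
  exact continuous_iff_continuousAt.2 fun p =>
    (hF.tendstoUniformly F p).tendsto_integral (.of_forall hint) (hint p)

end ParametricIntegral

theorem MeasureTheory.Measure.ext_of_forall_integral_eq_of_regular {X : Type*}
    [TopologicalSpace X] [LocallyCompactSpace X] [RegularSpace X] [MeasurableSpace X]
    [BorelSpace X] {μ ν : Measure X} [μ.Regular] [ν.Regular]
    (h : ∀ f : X → ℝ, Continuous f → HasCompactSupport f → ∫ x, f x ∂μ = ∫ x, f x ∂ν) :
    μ = ν := by
  have compact_eq : ∀ K, IsCompact K → μ K = ν K := fun K hK => by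
    rw [hK.measure_eq_biInf_integral_hasCompactSupport μ,
      hK.measure_eq_biInf_integral_hasCompactSupport ν]
    refine iInf_congr fun f => iInf_congr fun hf => iInf_congr fun hfc => ?_
    rw [h f hf hfc]
  have open_eq : ∀ U, IsOpen U → μ U = ν U := fun U hU => by
    rw [hU.measure_eq_iSup_isCompact μ, hU.measure_eq_iSup_isCompact ν]
    exact iSup_congr fun K => iSup_congr fun _ => iSup_congr fun hK => compact_eq K hK
  ext A -
  rw [A.measure_eq_iInf_isOpen μ, A.measure_eq_iInf_isOpen ν]
  exact iInf_congr fun U => iInf_congr fun _ => iInf_congr fun hU => open_eq U hU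

section CompactGroup

variable {G X : Type*} [Group G] [TopologicalSpace G] [IsTopologicalGroup G] [CompactSpace G]
  [TopologicalSpace X] [CompactSpace X] [MeasurableSpace X] [OpensMeasurableSpace X]
  [MulAction G X] [ContinuousSMul G X]

theorem measureReal_univ_mul_integral_eq_integral_smul [MeasurableSpace G] [BorelSpace G]
    [IsPretransitive G X] (η : Measure G) [IsFiniteMeasure η] [η.IsMulRightInvariant]
    (ρ : Measure X) [IsProbabilityMeasure ρ]
    (hρ : ∀ (g : G) (f : X → ℝ), Continuous f → ∫ x, f (g • x) ∂ρ = ∫ x, f x ∂ρ)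
    {f : X → ℝ} (hf : Continuous f) (a : X) :
    η.real univ * ∫ x, f x ∂ρ = ∫ g, f (g • a) ∂η := by
  have orbit_avg : ∀ x : X, ∫ g, f (g • x) ∂η = ∫ g, f (g • a) ∂η := fun x => by
    obtain ⟨k, rfl⟩ := exists_smul_eq G a x
    simp only [smul_smul]
    exact integral_mul_right_eq_self (fun g => f (g • a)) k
  calc η.real univ * ∫ x, f x ∂ρ = ∫ g, ∫ x, f (g • x) ∂ρ ∂η := by
        simp only [hρ _ f hf, integral_const, smul_eq_mul]
    _ = ∫ x, ∫ g, f (g • x) ∂η ∂ρ :=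
        integral_integral_swap_of_hasCompactSupport (f := fun g x => f (g • x))
          (hf.comp continuous_smul) (.of_compactSpace _)
    _ = ∫ g, f (g • a) ∂η := by simp only [orbit_avg, integral_const, probReal_univ, one_smul]

theorem integral_eq_of_isPretransitive [IsPretransitive G X] {μ ν : Measure X}
    [IsProbabilityMeasure μ] [IsProbabilityMeasure ν]
    (hμ : ∀ (g : G) (f : X → ℝ), Continuous f → ∫ x, f (g • x) ∂μ = ∫ x, f x ∂μ)
    (hν : ∀ (g : G) (f : X → ℝ), Continuous f → ∫ x, f (g • x) ∂ν = ∫ x, f x ∂ν)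
    {f : X → ℝ} (hf : Continuous f) : ∫ x, f x ∂μ = ∫ x, f x ∂ν := by
  borelize G
  obtain ⟨a⟩ := nonempty_of_isProbabilityMeasure μ
  exact mul_left_cancel₀ measureReal_univ_ne_zero
    ((measureReal_univ_mul_integral_eq_integral_smul (Measure.haar : Measure G).inv μ hμ hf a
      ).trans (measureReal_univ_mul_integral_eq_integral_smul _ ν hν hf a).symm)

end CompactGroup

class UniformEquicontinuousSMul (Γ X : Type*) [SMul Γ X] [UniformSpace X] : Prop where
  uniformEquicontinuous_smul : UniformEquicontinuous fun (g : Γ) (x : X) => g • x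

def envelope (Γ X : Type*) [SMul Γ X] [TopologicalSpace X] : Set (X → X) :=
  closure (range fun (g : Γ) (x : X) => g • x)

section Envelope

variable {Γ X : Type*} [Group Γ] [MulAction Γ X] [UniformSpace X]

theorem smul_mem_envelope (g : Γ) : (g • · : X → X) ∈ envelope Γ X :=
  subset_closure ⟨g, rfl⟩

variable [UniformEquicontinuousSMul Γ X]

instance UniformEquicontinuousSMul.continuousConstSMul : ContinuousConstSMul Γ X :=
  ⟨fun g => (UniformEquicontinuousSMul.uniformEquicontinuous_smul.uniformContinuous g).continuous⟩

theorem comp_mem_envelope {h k : X → X} (hh : h ∈ envelope Γ X) (hk : k ∈ envelope Γ X) :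
    h ∘ k ∈ envelope Γ X := by
  have smul_comp_mem : ∀ g : Γ, (g • ·) ∘ k ∈ envelope Γ X := fun g =>
    map_mem_closure (continuous_pi fun x => (continuous_const_smul g).comp (continuous_apply x)) hk
      (by rintro _ ⟨g', rfl⟩; exact ⟨g * g', funext fun x => mul_smul g g' x⟩)
  refine MapsTo.closure_left (f := (· ∘ k)) ?_ (continuous_pi fun x => continuous_apply (k x))
    isClosed_closure hh
  rintro _ ⟨g, rfl⟩
  exact smul_comp_mem g

theorem uniformEquicontinuous_coe_envelope :
    UniformEquicontinuous ((↑) : envelope Γ X → X → X) :=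
  (uniformEquicontinuous_iff_range.1 UniformEquicontinuousSMul.uniformEquicontinuous_smul).closure

instance : Monoid (envelope Γ X) where
  mul h k := ⟨h ∘ k, comp_mem_envelope h.2 k.2⟩
  mul_assoc _ _ _ := rfl
  one := ⟨id, one_smul_eq_id Γ (α := X) ▸ smul_mem_envelope 1⟩
  one_mul _ := rfl
  mul_one _ := rfl

instance : MulAction (envelope Γ X) X where
  smul h x := (h : X → X) x
  one_smul _ := rfl
  mul_smul _ _ _ := rfl

instance : ContinuousSMul (envelope Γ X) X :=
  ⟨uniformEquicontinuous_coe_envelope.equicontinuous.continuous_uncurry fun x =>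
    (continuous_apply x).comp continuous_subtype_val⟩

instance : ContinuousMul (envelope Γ X) where
  continuous_mul := .subtype_mk (continuous_pi fun x =>
    continuous_fst.smul (continuous_snd.smul (continuous_const (y := x)))) _

instance [CompactSpace X] : CompactSpace (envelope Γ X) :=
  isCompact_iff_compactSpace.1 isClosed_closure.isCompact

variable (Γ X) in
def toEnvelope : Γ →* envelope Γ X where
  toFun g := ⟨(g • ·), smul_mem_envelope g⟩
  map_one' := Subtype.ext (one_smul_eq_id Γ)
  map_mul' g g' := Subtype.ext (funext (mul_smul g g'))

theorem denseRange_toEnvelope : DenseRange (toEnvelope Γ X) := by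
  rw [DenseRange, Subtype.dense_iff, ← range_comp]
  exact subset_rfl

theorem isPretransitive_units_envelope [CompactSpace X] [T2Space X] {a : X}
    (ha : Dense (orbit Γ a)) : IsPretransitive (envelope Γ X)ˣ X := by
  have hclosed : IsClosed (orbit (envelope Γ X)ˣ a) :=
    (isCompact_range (continuous_id.smul continuous_const)).isClosed
  have hsub : orbit Γ a ⊆ orbit (envelope Γ X)ˣ a := by
    rintro _ ⟨g, rfl⟩
    exact ⟨(toEnvelope Γ X).toHomUnits g, rfl⟩
  rw [isPretransitive_iff_orbit_eq_univ a, ← univ_subset_iff, ← ha.closure_eq]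
  exact closure_minimal hsub hclosed

theorem integral_envelope_smul_eq_self [CompactSpace X] [MeasurableSpace X] [BorelSpace X]
    {ρ : Measure X} [IsFiniteMeasure ρ] [SMulInvariantMeasure Γ X ρ] (h : envelope Γ X)
    {f : X → ℝ} (hf : Continuous f) : ∫ x, f (h • x) ∂ρ = ∫ x, f x ∂ρ := by
  have hcont : Continuous fun h : envelope Γ X => ∫ x, f (h • x) ∂ρ :=
    continuous_integral_of_continuous_uncurry (F := fun h x => f (h • x))
      (hf.comp continuous_smul)
  refine congr_fun (denseRange_toEnvelope.equalizer hcont continuous_const (funext fun g => ?_)) h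
  exact integral_smul_eq_self (fun x => f x)

end Envelope

theorem stmt8_general {Γ X : Type*} [Group Γ] [UniformSpace X] [CompactSpace X] [T2Space X]
    [MulAction Γ X] [MeasurableSpace X] [BorelSpace X]
    (hLyap : ∀ U ∈ uniformity X, ∃ V ∈ uniformity X,
      ∀ (g : Γ) (x y : X), (x, y) ∈ V → (g • x, g • y) ∈ U)
    (a : X) (ha : Dense (MulAction.orbit Γ a))
    (μ ν : Measure X) [IsProbabilityMeasure μ] [IsProbabilityMeasure ν]
    [μ.Regular] [ν.Regular]
    (hμ : ∀ (g : Γ) (A : Set X), MeasurableSet A → μ ((g • ·) '' A) = μ A)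
    (hν : ∀ (g : Γ) (A : Set X), MeasurableSet A → ν ((g • ·) '' A) = ν A) :
    μ = ν := by
  have : UniformEquicontinuousSMul Γ X := ⟨fun U hU => by
    obtain ⟨V, hV, hVU⟩ := hLyap U hU
    exact mem_of_superset hV fun p hp g => hVU g p.1 p.2 hp⟩
  have : IsPretransitive (envelope Γ X)ˣ X := isPretransitive_units_envelope ha
  have : SMulInvariantMeasure Γ X μ := ((smulInvariantMeasure_tfae Γ μ).out 0 2).2 hμ
  have : SMulInvariantMeasure Γ X ν := ((smulInvariantMeasure_tfae Γ ν).out 0 2).2 hν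
  refine Measure.ext_of_forall_integral_eq_of_regular fun f hf _ => ?_
  exact integral_eq_of_isPretransitive (G := (envelope Γ X)ˣ)
    (fun u _ hf => integral_envelope_smul_eq_self (u : envelope Γ X) hf)
    (fun u _ hf => integral_envelope_smul_eq_self (u : envelope Γ X) hf) hf

/-- Unique ergodicity: a Lyapunov stable action on a compact Hausdorff space with a dense orbit
admits at most one invariant regular Borel probability measure. -/
theorem stmt8 {Γ X : Type*} [Group Γ] [UniformSpace X] [CompactSpace X] [T2Space X]
    [MulAction Γ X] [ContinuousConstSMul Γ X] [MeasurableSpace X] [BorelSpace X]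
    (hLyap : ∀ U ∈ uniformity X, ∃ V ∈ uniformity X,
      ∀ (g : Γ) (x y : X), (x, y) ∈ V → (g • x, g • y) ∈ U)
    (a : X) (ha : Dense (MulAction.orbit Γ a))
    (μ ν : Measure X) [IsProbabilityMeasure μ] [IsProbabilityMeasure ν]
    [μ.Regular] [ν.Regular]
    (hμ : ∀ (g : Γ) (A : Set X), MeasurableSet A → μ ((g • ·) '' A) = μ A)
    (hν : ∀ (g : Γ) (A : Set X), MeasurableSet A → ν ((g • ·) '' A) = ν A) :
    μ = ν :=
  stmt8_general hLyap a ha μ ν hμ hν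
end

section
/- Let Γ act on a compact Hausdorff space X by an action such that each orbit is finite with cardinality bounded by N, and the action is uniformly continuous. Then for any continuous φ : X → ℂ, each function φ_x : Γ → ℂ, φ_x(g) = φ(g•x), is periodic in the sense that it factors through the finite orbit, its unique invariant mean equals the orbit average M(φ_x) = (1/|Γ•x|) · Σ_{y ∈ Γ•x} φ(y), and the function x ↦ (1/|Γ•x|) Σ_{y ∈ Γ•x} φ(y) is continuous on X. -/
/-!
The orbit average at `x` is forced on any invariant mean: the indicators of the points of the
orbit `Γ • x`, pulled back to `Γ`, are left translates of each other and sum to `1`, so each has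
mean `1 / |Γ • x|`, and `g ↦ φ (g • x)` is their combination with coefficients `φ y`.

Continuity at `x`: let `H` be the stabilizer of `x` and `(g_q)` representatives of `Γ ⧸ H`.
Separate the points `g_q • x` by disjoint open sets `U_q` on which `φ` stays `ε`-close to
`φ (g_q • x)`. By uniform continuity, for `z` close to `x` all `g_q • h • z` (`h ∈ H`) lie in
`U_q`; disjointness then makes `(q, w) ↦ g_q • w` a bijection `Γ ⧸ H × H • z ≃ Γ • z`, so the
orbit average at `z` is an average of values `φ (g_q • w)`, each `ε`-close to `φ (g_q • x)`.
-/

open Finset MulAction Filter Topology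
open scoped BigOperators

section InvariantMean

variable {Γ : Type*} (M : (Γ → ℂ) → ℂ)

lemma exists_norm_sum_le {ι : Type*} (s : Finset ι) (F : ι → Γ → ℂ)
    (hF : ∀ i, ∃ C, ∀ g, ‖F i g‖ ≤ C) : ∃ C, ∀ g, ‖(∑ i ∈ s, F i) g‖ ≤ C := by
  choose C hC using hF
  refine ⟨∑ i ∈ s, C i, fun g => ?_⟩
  rw [Finset.sum_apply]
  exact (norm_sum_le _ _).trans (Finset.sum_le_sum fun i _ => hC i g)

lemma map_finset_sum_of_bounded {ι : Type*}
    (hadd : ∀ f₁ f₂ : Γ → ℂ, (∃ C, ∀ g, ‖f₁ g‖ ≤ C) → (∃ C, ∀ g, ‖f₂ g‖ ≤ C) →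
      M (f₁ + f₂) = M f₁ + M f₂)
    (hsmul : ∀ (c : ℂ) (f : Γ → ℂ), (∃ C, ∀ g, ‖f g‖ ≤ C) → M (c • f) = c * M f)
    (s : Finset ι) (F : ι → Γ → ℂ) (hF : ∀ i, ∃ C, ∀ g, ‖F i g‖ ≤ C) :
    M (∑ i ∈ s, F i) = ∑ i ∈ s, M (F i) := by
  induction s using Finset.cons_induction with
  | empty => simpa using hsmul 0 (fun _ => 1) ⟨1, fun _ => by simp⟩
  | cons a s ha ih =>
    rw [sum_cons, sum_cons, hadd _ _ (hF a) (exists_norm_sum_le s F hF), ih]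

variable {X : Type*} [Group Γ] [MulAction Γ X]

open scoped Classical in
variable (Γ) in
noncomputable def orbitIndicator (x y : X) (g : Γ) : ℂ := if g • x = y then 1 else 0

lemma norm_orbitIndicator_le_one (x y : X) (g : Γ) : ‖orbitIndicator Γ x y g‖ ≤ 1 := by
  unfold orbitIndicator
  split_ifs <;> simp

lemma orbitIndicator_smul_right (x : X) (k : Γ) :
    orbitIndicator Γ x (k • x) = fun g : Γ => orbitIndicator Γ x x (k⁻¹ * g) := by
  classical
  funext g
  exact if_congr (by rw [mul_smul, inv_smul_eq_iff, eq_comm]) rfl rfl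

lemma sum_orbitIndicator {x : X} (hx : (orbit Γ x).Finite) :
    ∑ y ∈ hx.toFinset, orbitIndicator Γ x y = fun _ : Γ => 1 := by
  classical
  funext g
  simp [orbitIndicator, Finset.sum_apply]

lemma sum_smul_orbitIndicator {x : X} (hx : (orbit Γ x).Finite) (φ : X → ℂ) :
    ∑ y ∈ hx.toFinset, φ y • orbitIndicator Γ x y = fun g : Γ => φ (g • x) := by
  classical
  funext g
  simp [orbitIndicator, Finset.sum_apply]

theorem map_smul_eq_expect_orbit
    (hadd : ∀ f₁ f₂ : Γ → ℂ, (∃ C, ∀ g, ‖f₁ g‖ ≤ C) → (∃ C, ∀ g, ‖f₂ g‖ ≤ C) →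
      M (f₁ + f₂) = M f₁ + M f₂)
    (hsmul : ∀ (c : ℂ) (f : Γ → ℂ), (∃ C, ∀ g, ‖f g‖ ≤ C) → M (c • f) = c * M f)
    (hone : M (fun _ => 1) = 1)
    (hinv : ∀ (f : Γ → ℂ) (h : Γ), (∃ C, ∀ g, ‖f g‖ ≤ C) → M (fun g => f (h * g)) = M f)
    {x : X} (hx : (orbit Γ x).Finite) (φ : X → ℂ) :
    M (fun g => φ (g • x)) = 𝔼 y ∈ hx.toFinset, φ y := by
  set O := hx.toFinset
  have hχ_bdd : ∀ y : X, ∃ C, ∀ g : Γ, ‖orbitIndicator Γ x y g‖ ≤ C :=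
    fun y => ⟨1, norm_orbitIndicator_le_one x y⟩
  have hχ_translate : ∀ y ∈ O, M (orbitIndicator Γ x y) = M (orbitIndicator Γ x x) := by
    intro y hy
    obtain ⟨k, rfl⟩ := hx.mem_toFinset.mp hy
    rw [orbitIndicator_smul_right, hinv _ _ (hχ_bdd x)]
  have hχ_x : (#O : ℂ) * M (orbitIndicator Γ x x) = 1 := by
    rw [← hone, ← sum_orbitIndicator hx, map_finset_sum_of_bounded M hadd hsmul _ _ hχ_bdd,
      sum_congr rfl hχ_translate, sum_const, nsmul_eq_mul]
  have hφχ_bdd : ∀ y, ∃ C, ∀ g, ‖(φ y • orbitIndicator Γ x y) g‖ ≤ C := fun y =>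
    ⟨‖φ y‖, fun g => by
      simpa using mul_le_mul_of_nonneg_left (norm_orbitIndicator_le_one x y g) (norm_nonneg (φ y))⟩
  calc M (fun g => φ (g • x))
      = ∑ y ∈ O, φ y * M (orbitIndicator Γ x x) := by
        rw [← sum_smul_orbitIndicator hx, map_finset_sum_of_bounded M hadd hsmul _ _ hφχ_bdd]
        exact sum_congr rfl fun y hy => by rw [hsmul _ _ (hχ_bdd y), hχ_translate y hy]
    _ = 𝔼 y ∈ O, φ y := by
        rw [expect_eq_sum_div_card, sum_div, eq_inv_of_mul_eq_one_right hχ_x]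
        simp_rw [div_eq_mul_inv]

end InvariantMean

section OrbitAverage

variable {Γ X : Type*} [Group Γ] [MulAction Γ X]

lemma orbit_eq_image_out_smul (H : Subgroup Γ) (z : X) :
    orbit Γ z = (fun p : (Γ ⧸ H) × X => p.1.out • p.2) '' (Set.univ ×ˢ orbit H z) := by
  ext y
  constructor
  · rintro ⟨g, rfl⟩
    have hg : (QuotientGroup.mk g : Γ ⧸ H).out⁻¹ * g ∈ H := by
      rw [← QuotientGroup.eq, QuotientGroup.out_eq']
    exact ⟨(QuotientGroup.mk g, (⟨_, hg⟩ : H) • z), ⟨trivial, mem_orbit _ _⟩,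
      by simp [Subgroup.smul_def, smul_smul]⟩
  · rintro ⟨⟨q, _⟩, ⟨-, ⟨h, rfl⟩⟩, rfl⟩
    exact ⟨q.out * h, mul_smul _ _ _⟩

lemma expect_orbit_eq_expect_out_smul (H : Subgroup Γ) [Fintype (Γ ⧸ H)] {z : X}
    (hz : (orbit Γ z).Finite) (hHz : (orbit H z).Finite)
    (hinj : Set.InjOn (fun p : (Γ ⧸ H) × X => p.1.out • p.2)
      ↑(univ ×ˢ hHz.toFinset : Finset ((Γ ⧸ H) × X)))
    (φ : X → ℂ) :
    𝔼 y ∈ hz.toFinset, φ y =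
      𝔼 p ∈ (univ ×ˢ hHz.toFinset : Finset ((Γ ⧸ H) × X)), φ (p.1.out • p.2) := by
  classical
  rw [← expect_image hinj]
  congr 1
  ext y
  simp [orbit_eq_image_out_smul H z]

lemma out_smul_injective (x : X) :
    Function.Injective fun q : Γ ⧸ stabilizer Γ x => q.out • x := by
  convert injective_ofQuotientStabilizer Γ x using 1
  funext q
  rw [← ofQuotientStabilizer_mk, QuotientGroup.out_eq']

lemma expect_orbit_eq_expect_out_smul_self {x : X} (hx : (orbit Γ x).Finite)
    [Fintype (Γ ⧸ stabilizer Γ x)] (φ : X → ℂ) :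
    𝔼 y ∈ hx.toFinset, φ y = 𝔼 q : Γ ⧸ stabilizer Γ x, φ (q.out • x) := by
  classical
  have hHx : orbit (stabilizer Γ x) x = {x} :=
    Set.eq_singleton_iff_unique_mem.mpr ⟨mem_orbit_self x, by rintro _ ⟨h, rfl⟩; exact h.2⟩
  rw [← expect_image (out_smul_injective x).injOn]
  congr 1
  ext y
  simp [orbit_eq_image_out_smul (stabilizer Γ x) x, hHx]

lemma injOn_out_smul_of_pairwiseDisjoint {x : X} [Fintype (Γ ⧸ stabilizer Γ x)] {U : X → Set X}
    (hU : (orbit Γ x).PairwiseDisjoint U) {S : Finset X}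
    (hS : ∀ s ∈ S, ∀ q : Γ ⧸ stabilizer Γ x, q.out • s ∈ U (q.out • x)) :
    Set.InjOn (fun p : (Γ ⧸ stabilizer Γ x) × X => p.1.out • p.2)
      ↑(univ ×ˢ S : Finset ((Γ ⧸ stabilizer Γ x) × X)) := by
  rintro ⟨q, s⟩ hqs ⟨r, t⟩ hrt (hqr : q.out • s = r.out • t)
  simp only [coe_product, coe_univ, Set.mem_prod, Set.mem_univ, true_and, mem_coe] at hqs hrt
  obtain rfl : q = r := by
    refine out_smul_injective x (hU.elim (mem_orbit _ _) (mem_orbit _ _) ?_)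
    exact Set.not_disjoint_iff.mpr ⟨_, hS s hqs q, hqr ▸ hS t hrt r⟩
  rw [smul_left_cancel _ hqr]

lemma dist_expect_orbit_le {x z : X} [Fintype (Γ ⧸ stabilizer Γ x)] (hx : (orbit Γ x).Finite)
    (hz : (orbit Γ z).Finite) {U : X → Set X} (hU : (orbit Γ x).PairwiseDisjoint U)
    (φ : X → ℂ) {ε : ℝ}
    (hnear : ∀ h ∈ stabilizer Γ x, ∀ q : Γ ⧸ stabilizer Γ x,
      q.out • h • z ∈ U (q.out • x) ∧ dist (φ (q.out • h • z)) (φ (q.out • x)) ≤ ε) :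
    dist (𝔼 y ∈ hz.toFinset, φ y) (𝔼 y ∈ hx.toFinset, φ y) ≤ ε := by
  set H := stabilizer Γ x
  have hHz : (orbit H z).Finite := hz.subset (orbit_subgroup_subset H z)
  set S := hHz.toFinset
  have hS : ∀ s ∈ S, ∀ q : Γ ⧸ H,
      q.out • s ∈ U (q.out • x) ∧ dist (φ (q.out • s)) (φ (q.out • x)) ≤ ε := by
    intro s hs
    obtain ⟨h, rfl⟩ := hHz.mem_toFinset.mp hs
    exact hnear h h.2
  have hS_nonempty : S.Nonempty := ⟨z, hHz.mem_toFinset.mpr (mem_orbit_self z)⟩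
  have hx_prod : 𝔼 q : Γ ⧸ H, φ (q.out • x) =
      𝔼 p ∈ (univ ×ˢ S : Finset ((Γ ⧸ H) × X)), φ (p.1.out • x) := by
    rw [expect_product]
    simp only [expect_const hS_nonempty]
  rw [expect_orbit_eq_expect_out_smul H hz hHz
      (injOn_out_smul_of_pairwiseDisjoint hU fun s hs q => (hS s hs q).1),
    expect_orbit_eq_expect_out_smul_self hx, hx_prod, dist_eq_norm, ← expect_sub_distrib]
  calc _ ≤ 𝔼 p ∈ (univ ×ˢ S : Finset ((Γ ⧸ H) × X)), ‖φ (p.1.out • p.2) - φ (p.1.out • x)‖ :=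
        RCLike.norm_expect_le (K := ℂ)
    _ ≤ ε := by
      refine expect_le (univ_nonempty.product hS_nonempty) fun p hp => ?_
      rw [← dist_eq_norm]
      exact (hS p.2 (mem_product.mp hp).2 p.1).2

end OrbitAverage

section Continuity

variable {Γ X : Type*} [Group Γ] [MulAction Γ X] [TopologicalSpace X]

lemma eventually_forall_stabilizer_smul {x : X}
    (hUC : ∀ W ∈ 𝓝 x, ∃ V ∈ 𝓝 x, ∀ g : Γ, g • x = x → ∀ y ∈ V, g • y ∈ W)
    {p : X → Prop} (hp : ∀ᶠ w in 𝓝 x, p w) :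
    ∀ᶠ z in 𝓝 x, ∀ g ∈ stabilizer Γ x, p (g • z) := by
  obtain ⟨V, hV, hVp⟩ := hUC _ hp
  filter_upwards [hV] with z hz g hg using hVp g hg z hz

variable [T2Space X] [ContinuousConstSMul Γ X]

theorem continuousAt_expect_orbit (hfin : ∀ x : X, (orbit Γ x).Finite) {x : X}
    (hUC : ∀ W ∈ 𝓝 x, ∃ V ∈ 𝓝 x, ∀ g : Γ, g • x = x → ∀ y ∈ V, g • y ∈ W) (φ : C(X, ℂ)) :
    ContinuousAt (fun z => 𝔼 y ∈ (hfin z).toFinset, φ y) x := by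
  have : Finite (orbit Γ x) := hfin x
  have : Finite (Γ ⧸ stabilizer Γ x) := .of_equiv _ (orbitEquivQuotientStabilizer Γ x)
  have := Fintype.ofFinite (Γ ⧸ stabilizer Γ x)
  obtain ⟨U, hU, hUdisj⟩ := (hfin x).t2_separation
  rw [ContinuousAt, Metric.tendsto_nhds]
  intro ε hε
  have hnear : ∀ᶠ w in 𝓝 x, ∀ q : Γ ⧸ stabilizer Γ x,
      q.out • w ∈ U (q.out • x) ∧ dist (φ (q.out • w)) (φ (q.out • x)) ≤ ε / 2 := by
    refine eventually_all.mpr fun q => ?_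
    have hcont : Continuous fun w : X => q.out • w := continuous_const_smul _
    exact ((hcont.tendsto x).eventually ((hU _).2.mem_nhds (hU _).1)).and
      (((φ.continuous.comp hcont).tendsto x).eventually
        (Metric.closedBall_mem_nhds _ (half_pos hε)))
  filter_upwards [eventually_forall_stabilizer_smul hUC hnear] with z hz
  exact (dist_expect_orbit_le (hfin x) (hfin z) hUdisj φ hz).trans_lt (half_lt_self hε)

end Continuity

theorem stmt10_general {Γ X : Type*} [Group Γ] [TopologicalSpace X] [T2Space X]
    [MulAction Γ X] [ContinuousConstSMul Γ X]
    (hfin : ∀ x : X, (MulAction.orbit Γ x).Finite)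
    (hUC : ∀ x : X, ∀ W ∈ nhds x, ∃ V ∈ nhds x, ∀ g : Γ, g • x = x → ∀ y ∈ V, g • y ∈ W)
    (φ : C(X, ℂ)) :
    (∀ (x : X) (g h : Γ), g • x = h • x → φ (g • x) = φ (h • x)) ∧
    (∀ M : (Γ → ℂ) → ℂ,
      (∀ f₁ f₂ : Γ → ℂ, (∃ C, ∀ g, ‖f₁ g‖ ≤ C) → (∃ C, ∀ g, ‖f₂ g‖ ≤ C) →
        M (f₁ + f₂) = M f₁ + M f₂) →
      (∀ (c : ℂ) (f : Γ → ℂ), (∃ C, ∀ g, ‖f g‖ ≤ C) → M (c • f) = c * M f) →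
      (M (fun _ => 1) = 1) →
      (∀ (f : Γ → ℂ) (C : ℝ), (∀ g, ‖f g‖ ≤ C) → ‖M f‖ ≤ C) →
      (∀ (f : Γ → ℂ) (h : Γ), (∃ C, ∀ g, ‖f g‖ ≤ C) → M (fun g => f (h * g)) = M f) →
      ∀ x : X,
        M (fun g => φ (g • x)) =
          (((hfin x).toFinset.card : ℂ))⁻¹ * ∑ y ∈ (hfin x).toFinset, φ y) ∧
    Continuous fun x : X =>
      (((hfin x).toFinset.card : ℂ))⁻¹ * ∑ y ∈ (hfin x).toFinset, φ y := by
  have hexpect : ∀ x, ((hfin x).toFinset.card : ℂ)⁻¹ * ∑ y ∈ (hfin x).toFinset, φ y =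
      𝔼 y ∈ (hfin x).toFinset, φ y := fun x => by
    rw [expect_eq_sum_div_card, div_eq_inv_mul]
  simp only [hexpect]
  refine ⟨fun x g h hgh => congrArg φ hgh, ?_, ?_⟩
  · intro M hadd hsmul hone _ hinv x
    exact map_smul_eq_expect_orbit M hadd hsmul hone hinv (hfin x) φ
  · exact continuous_iff_continuousAt.mpr fun x => continuousAt_expect_orbit hfin (hUC x) φ

/-- For a uniformly continuous action with finite orbits of uniformly bounded cardinality on a
compact Hausdorff space: each `φ_x` factors through the orbit, any invariant mean on bounded
functions sends `φ_x` to the orbit average, and the orbit average is continuous in `x`. -/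
theorem stmt10 {Γ X : Type*} [Group Γ] [TopologicalSpace X] [CompactSpace X] [T2Space X]
    [MulAction Γ X] [ContinuousConstSMul Γ X]
    (N : ℕ)
    (hfin : ∀ x : X, (MulAction.orbit Γ x).Finite)
    (hN : ∀ x : X, Nat.card (MulAction.orbit Γ x) ≤ N)
    (hUC : ∀ x : X, ∀ W ∈ nhds x, ∃ V ∈ nhds x, ∀ g : Γ, g • x = x → ∀ y ∈ V, g • y ∈ W)
    (φ : C(X, ℂ)) :
    (∀ (x : X) (g h : Γ), g • x = h • x → φ (g • x) = φ (h • x)) ∧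
    (∀ M : (Γ → ℂ) → ℂ,
      (∀ f₁ f₂ : Γ → ℂ, (∃ C, ∀ g, ‖f₁ g‖ ≤ C) → (∃ C, ∀ g, ‖f₂ g‖ ≤ C) →
        M (f₁ + f₂) = M f₁ + M f₂) →
      (∀ (c : ℂ) (f : Γ → ℂ), (∃ C, ∀ g, ‖f g‖ ≤ C) → M (c • f) = c * M f) →
      (M (fun _ => 1) = 1) →
      (∀ (f : Γ → ℂ) (C : ℝ), (∀ g, ‖f g‖ ≤ C) → ‖M f‖ ≤ C) →
      (∀ (f : Γ → ℂ) (h : Γ), (∃ C, ∀ g, ‖f g‖ ≤ C) → M (fun g => f (h * g)) = M f) →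
      ∀ x : X,
        M (fun g => φ (g • x)) =
          (((hfin x).toFinset.card : ℂ))⁻¹ * ∑ y ∈ (hfin x).toFinset, φ y) ∧
    Continuous fun x : X =>
      (((hfin x).toFinset.card : ℂ))⁻¹ * ∑ y ∈ (hfin x).toFinset, φ y :=
  stmt10_general hfin hUC φ
end

section
/- Let K be the Stone–Čech compactification βℕ of the natural numbers, let X = K × S¹ with S¹ the unit circle, and let ℤ act on X by n•(y, s) = (y, e^{iαπn}·s) for a fixed irrational α, acting trivially on K. Then this action is Lyapunov stable with respect to the unique uniform structure on the compact Hausdorff space X, and the algebra of continuous ℤ-invariant functions on X is isomorphic (as a C*-algebra) to C(K). -/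
/-!
Rotation by a fixed angle is an isometry of the circle and the `βℕ` coordinate is left alone, so
the whole family of iterates is uniformly equicontinuous: this is Lyapunov stability. Since `α` is
irrational the angles `απn` are dense in the circle, so a continuous invariant function is constant
on each circle `{y} × S¹`; restricting to the slice `βℕ × {1}` is then inverse to pulling back
along the projection to `βℕ`.
-/

/-- The `ℤ`-action on `βℕ × S¹` rotating the circle by the angle `απ` and fixing the first
coordinate. -/
noncomputable def rotAct (α : ℝ) (n : ℤ) (p : StoneCech ℕ × Circle) : StoneCech ℕ × Circle :=
  (p.1, Circle.exp (α * Real.pi * n) * p.2)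

/-- The unique uniform structure on the compact Hausdorff space `βℕ`. -/
noncomputable instance : UniformSpace (StoneCech ℕ) := uniformSpaceOfCompactR1

/-- The star subalgebra of `ℤ`-invariant continuous functions on `βℕ × S¹`. -/
noncomputable def invariantFns (α : ℝ) : StarSubalgebra ℂ C(StoneCech ℕ × Circle, ℂ) where
  carrier := {φ | ∀ (n : ℤ) (p : StoneCech ℕ × Circle), φ (rotAct α n p) = φ p}
  mul_mem' := by
    intro a b ha hb n p
    simp only [ContinuousMap.mul_apply, ha n p, hb n p]
  add_mem' := by
    intro a b ha hb n p
    simp only [ContinuousMap.add_apply, ha n p, hb n p]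
  algebraMap_mem' := by
    intro c n p
    simp
  star_mem' := by
    intro a ha n p
    simp only [ContinuousMap.star_apply, ha n p]

open Filter Real

theorem UniformEquicontinuous.prodMap {ι α α' β β' : Type*} [UniformSpace α] [UniformSpace α']
    [UniformSpace β] [UniformSpace β'] {F : ι → β → α} {G : ι → β' → α'}
    (hF : UniformEquicontinuous F) (hG : UniformEquicontinuous G) :
    UniformEquicontinuous fun i => Prod.map (F i) (G i) := by
  intro U hU
  obtain ⟨t, ht, htU⟩ := mem_comap.1 (uniformity_prod_eq_comap_prod (α := α) (β := α') ▸ hU)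
  obtain ⟨U₁, hU₁, U₂, hU₂, hsub⟩ := mem_prod_iff.1 ht
  filter_upwards [uniformContinuous_fst.eventually (hF U₁ hU₁),
    uniformContinuous_snd.eventually (hG U₂ hU₂)] with xy h₁ h₂ i
  exact htU (hsub ⟨h₁ i, h₂ i⟩)

theorem uniformEquicontinuous_const_id (ι β : Type*) [UniformSpace β] :
    UniformEquicontinuous fun (_ : ι) (x : β) => x :=
  fun _ hU => mem_of_superset hU fun _ h _ => h

theorem Circle.isometry_mul_left (c : Circle) : Isometry (c * ·) :=
  Isometry.of_dist_eq fun x y => by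
    change dist ((c : ℂ) * x) (c * y) = dist (x : ℂ) y
    rw [dist_eq_norm, dist_eq_norm, ← mul_sub, norm_mul, Circle.norm_coe, one_mul]

theorem uniformEquicontinuous_rotAct (α : ℝ) : UniformEquicontinuous (rotAct α) :=
  (uniformEquicontinuous_const_id ℤ _).prodMap
    (LipschitzWith.uniformEquicontinuous _ 1 fun _ => (Circle.isometry_mul_left _).lipschitz)

theorem Circle.denseRange_exp_mul_int {θ : ℝ} (h : Irrational (θ / (2 * π))) :
    DenseRange fun n : ℤ => Circle.exp (θ * n) := by
  have := AddCircle.homeomorphCircle'.surjective.denseRange.comp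
    (AddCircle.denseRange_zsmul_coe_iff.2 h) AddCircle.homeomorphCircle'.continuous
  convert this using 2 with n
  simp [← AddCircle.coe_zsmul, AddCircle.homeomorphCircle'_apply_mk, mul_comm]

theorem DenseRange.apply_eq_apply_one {ι Y G T : Type*} [TopologicalSpace Y] [TopologicalSpace G]
    [MulOneClass G] [TopologicalSpace T] [T2Space T] {g : ι → G} (hg : DenseRange g)
    {f : Y × G → T} (hf : Continuous f) (hinv : ∀ i p, f (p.1, g i * p.2) = f p) (y : Y) (s : G) :
    f (y, s) = f (y, 1) :=
  congrFun (hg.equalizer (hf.comp (Continuous.prodMk_right y)) continuous_const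
    (funext fun i => by simpa using hinv i (y, 1))) s

theorem Circle.denseRange_exp_mul_pi_mul_int {α : ℝ} (hα : Irrational α) :
    DenseRange fun n : ℤ => Circle.exp (α * π * n) :=
  Circle.denseRange_exp_mul_int <| by
    rw [mul_div_mul_right _ _ pi_ne_zero]
    exact_mod_cast hα.div_natCast two_ne_zero

theorem mem_invariantFns_iff {α : ℝ} (hα : Irrational α) (φ : C(StoneCech ℕ × Circle, ℂ)) :
    φ ∈ invariantFns α ↔ ∀ p : StoneCech ℕ × Circle, φ p = φ (p.1, 1) :=
  ⟨fun h p => (Circle.denseRange_exp_mul_pi_mul_int hα).apply_eq_apply_one φ.continuous h p.1 p.2,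
    fun h _ p => (h _).trans (h p).symm⟩

noncomputable def invariantFnsEquiv {α : ℝ} (hα : Irrational α) :
    invariantFns α ≃⋆ₐ[ℂ] C(StoneCech ℕ, ℂ) where
  toFun φ := (φ : C(StoneCech ℕ × Circle, ℂ)).comp (.prodMk (.id _) (.const _ 1))
  invFun ψ := ⟨ψ.comp .fst, fun _ _ => rfl⟩
  left_inv φ := Subtype.ext <| ContinuousMap.ext fun p =>
    ((mem_invariantFns_iff hα φ).1 φ.2 p).symm
  right_inv _ := rfl
  map_mul' _ _ := rfl
  map_add' _ _ := rfl
  map_smul' _ _ := rfl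
  map_star' _ := rfl

/-- The irrational rotation action of `ℤ` on `X = βℕ × S¹` is Lyapunov stable, and the algebra
of continuous invariant functions is isomorphic, as a C*-algebra, to `C(βℕ)`. -/
theorem stmt11 (α : ℝ) (hα : Irrational α) :
    (∀ U ∈ uniformity (StoneCech ℕ × Circle), ∃ V ∈ uniformity (StoneCech ℕ × Circle),
      ∀ (n : ℤ) (p q : StoneCech ℕ × Circle), (p, q) ∈ V → (rotAct α n p, rotAct α n q) ∈ U) ∧
    Nonempty ((invariantFns α) ≃⋆ₐ[ℂ] C(StoneCech ℕ, ℂ)) := by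
  refine ⟨fun U hU => ?_, ⟨invariantFnsEquiv hα⟩⟩
  obtain ⟨V, hV, hVU⟩ := (uniformEquicontinuous_rotAct α U hU).exists_mem
  exact ⟨V, hV, fun n p q hpq => hVU (p, q) hpq n⟩
end

section
/- Let D = ∏_{k=1}^∞ D_k where each D_k is a two-point discrete space, let G = ⊕_{k=1}^∞ ℤ/2 act on D coordinatewise, and let p_n : G → G be the projection onto the first n coordinates. Define an action β of G on X = J × D, where J = {0} ∪ {1/n : n ≥ 1}, by β_g(1/n, d) = (1/n, p_n(g)•d) and β_g(0, d) = (0, g•d). Then: (a) the orbit of any point (1/n, d) is finite of cardinality 2ⁿ; (b) the orbit of any point (0, d) is infinite; (c) the action β is by homeomorphisms and is Lyapunov stable with respect to the metric on X obtained from the product metric where the two points of D_k are at distance 2^{−k}. -/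
/-!
Over `1/(n+1)` the group acts through `p_{n+1}`, i.e. through `(ℤ/2)^{n+1}`, which flips the first
`n+1` coordinates and acts freely; over `0` distinct elements of `G` flip distinct sets of
coordinates. For stability: coordinate flips are isometries of `D`, so every `β g` is an isometry
on each fibre; the points `1/(n+1)` are isolated in `J`; and for `x` over `0` and `y` over
`1/(m+1)`, the flips by `g` and by `p_{m+1}(g)` differ only beyond coordinate `m`, by at most
`2^{-(m+1)} ≤ 1/(m+1) = d(x.1, y.1)`. Hence `β g` is `1`-Lipschitz at points over `0`, uniformly
in `g`.
-/

open Filter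

/-- The Cantor set `D = ∏_k D_k` of two-point spaces, metrized so that sequences first
differing at the `k`-th coordinate are at distance `2^{-k}` (the two points of the `k`-th
factor are at distance `2^{-k}`). -/
noncomputable instance cantorMetric : MetricSpace (ℕ → Bool) := PiNat.metricSpace

def Jset : Set ℝ := {x : ℝ | x = 0 ∨ ∃ n : ℕ, x = 1 / (n + 1)}

open Function PiNat Topology

/-- For `P = {k | g k = 1}` this is the action of `g ∈ G` on `D`. -/
def flipOn (P : ℕ → Prop) [DecidablePred P] (d : ℕ → Bool) : ℕ → Bool :=
  fun k => if P k then !d k else d k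

section flipOn

variable {P Q : ℕ → Prop} [DecidablePred P] [DecidablePred Q]

theorem flipOn_eq_flipOn_iff {d : ℕ → Bool} :
    flipOn P d = flipOn Q d ↔ ∀ k, (P k ↔ Q k) := by
  refine funext_iff.trans (forall_congr' fun k => ?_)
  by_cases hP : P k <;> by_cases hQ : Q k <;> simp [flipOn, hP, hQ]

theorem flipOn_flipOn (d : ℕ → Bool) : flipOn P (flipOn P d) = d := by
  funext k
  by_cases hP : P k <;> simp [flipOn, hP]

theorem dist_flipOn_le (a b : ℕ → Bool) : dist (flipOn P a) (flipOn P b) ≤ dist a b :=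
  lipschitz_with_one_iff_forall_dist_image_le_of_mem_cylinder.2 (fun x y n h => by
    rw [dist_comm]
    exact mem_cylinder_iff_dist_le.1 fun i hi => by simp only [flipOn, mem_cylinder_iff.1 h i hi])
    a b

theorem isometry_flipOn : Isometry (flipOn P) :=
  Isometry.of_dist_eq fun a b => (dist_flipOn_le a b).antisymm <| by
    simpa only [flipOn_flipOn] using dist_flipOn_le (P := P) (flipOn P a) (flipOn P b)

theorem dist_flipOn_flipOn_le {n : ℕ} (h : ∀ k < n, (P k ↔ Q k)) (a b : ℕ → Bool) :
    dist (flipOn P a) (flipOn Q b) ≤ max (dist a b) ((1 / 2) ^ n) :=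
  calc dist (flipOn P a) (flipOn Q b)
      ≤ max (dist (flipOn P a) (flipOn P b)) (dist (flipOn P b) (flipOn Q b)) :=
        dist_triangle_nonarch _ _ _
    _ ≤ max (dist a b) ((1 / 2) ^ n) :=
        max_le_max (isometry_flipOn.dist_eq a b).le <| mem_cylinder_iff_dist_le.1
          fun k hk => by simp only [flipOn, h k hk]

end flipOn

theorem ZMod.eq_iff_eq_one_iff_eq_one {a b : ZMod 2} : a = b ↔ (a = 1 ↔ b = 1) := by
  revert a b; decide

theorem Finsupp.surjective_restrict_fin {M : Type*} [Zero M] (N : ℕ) :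
    Surjective fun (g : ℕ →₀ M) (i : Fin N) => g i := fun v =>
  ⟨embDomain Fin.valEmbedding (equivFunOnFinite.symm v), funext fun i =>
    (embDomain_apply_self Fin.valEmbedding _ i).trans (by simp)⟩

theorem injective_flipOn_eq_one (d : ℕ → Bool) :
    Injective fun g : ℕ →₀ ZMod 2 => flipOn (fun k => g k = 1) d := fun _ _ h =>
  Finsupp.ext fun k => ZMod.eq_iff_eq_one_iff_eq_one.2 (flipOn_eq_flipOn_iff.1 h k)

theorem card_range_flipOn_lt (N : ℕ) (d : ℕ → Bool) :
    Nat.card (Set.range fun g : ℕ →₀ ZMod 2 => flipOn (fun k => k < N ∧ g k = 1) d) =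
      2 ^ N := by
  set F : (Fin N → ZMod 2) → ℕ → Bool :=
    fun v => flipOn (fun k => ∃ h : k < N, v ⟨k, h⟩ = 1) d
  have hF : Injective F := fun v w h => funext fun i => ZMod.eq_iff_eq_one_iff_eq_one.2 <| by
    simpa [i.isLt] using flipOn_eq_flipOn_iff.1 h i
  have hrange : (Set.range fun g : ℕ →₀ ZMod 2 => flipOn (fun k => k < N ∧ g k = 1) d) =
      Set.range F := by
    rw [← (Finsupp.surjective_restrict_fin N).range_comp F]
    congr 1
    funext g
    exact flipOn_eq_flipOn_iff.2 fun k => by simp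
  rw [hrange, Nat.card_range_of_injective hF]
  simp

theorem one_half_pow_succ_le (m : ℕ) : (1 / 2 : ℝ) ^ (m + 1) ≤ 1 / (m + 1) := by
  rw [one_div_pow]
  exact one_div_le_one_div_of_le (by positivity) (by exact_mod_cast (Nat.lt_two_pow_self).le)

theorem Jset.eventually_eq_of_eq_one_div_succ {a : Jset} {n : ℕ}
    (ha : (a : ℝ) = 1 / (n + 1)) : ∀ᶠ b in 𝓝 a, b = a := by
  have hinv : Tendsto (fun x : ℝ => x⁻¹) (𝓝 (a : ℝ)) (𝓝 (n + 1)) := by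
    simpa [ha] using tendsto_inv₀ (x := (a : ℝ)) (by rw [ha]; positivity)
  filter_upwards [(continuous_subtype_val.tendsto a).eventually
    (hinv.eventually (Metric.ball_mem_nhds _ one_pos))] with b hb
  rcases b.2 with h0 | ⟨m, hm⟩
  · simp only [h0, inv_zero, dist_zero_left, Real.norm_eq_abs] at hb
    exact absurd hb ((le_abs_self _).trans' (by simp)).not_gt
  · have hmn : m = n := by
      by_contra hne
      simp only [hm, one_div, inv_inv, dist_add_right, Nat.dist_cast_real] at hb
      exact (Nat.pairwise_one_le_dist hne).not_gt hb
    exact Subtype.ext (by rw [hm, ha, hmn])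

structure IsProjectedFlipAction
    (β : (ℕ →₀ ZMod 2) → Jset × (ℕ → Bool) → Jset × (ℕ → Bool)) : Prop where
  over_zero : ∀ g p, (p.1 : ℝ) = 0 → β g p = (p.1, flipOn (fun k => g k = 1) p.2)
  over_one_div_succ : ∀ g p (n : ℕ), (p.1 : ℝ) = 1 / (n + 1) →
    β g p = (p.1, flipOn (fun k => k < n + 1 ∧ g k = 1) p.2)

namespace IsProjectedFlipAction

variable {β : (ℕ →₀ ZMod 2) → Jset × (ℕ → Bool) → Jset × (ℕ → Bool)}

theorem dist_eq_of_fst_eq (hβ : IsProjectedFlipAction β) (g : ℕ →₀ ZMod 2)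
    {x y : Jset × (ℕ → Bool)} (h : x.1 = y.1) : dist (β g x) (β g y) = dist x y := by
  rcases x.1.2 with h0 | ⟨n, hn⟩
  · rw [hβ.over_zero g x h0, hβ.over_zero g y (h ▸ h0)]
    exact (isometry_id.prodMap (isometry_flipOn (P := fun k => g k = 1))).dist_eq x y
  · rw [hβ.over_one_div_succ g x n hn, hβ.over_one_div_succ g y n (h ▸ hn)]
    exact (isometry_id.prodMap (isometry_flipOn (P := fun k => k < n + 1 ∧ g k = 1))).dist_eq x y

theorem dist_le_of_fst_eq_zero (hβ : IsProjectedFlipAction β) (g : ℕ →₀ ZMod 2)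
    {x : Jset × (ℕ → Bool)} (hx : (x.1 : ℝ) = 0) (y : Jset × (ℕ → Bool)) :
    dist (β g x) (β g y) ≤ dist x y := by
  rcases y.1.2 with hy | ⟨m, hm⟩
  · exact (hβ.dist_eq_of_fst_eq g (Subtype.ext (hx.trans hy.symm))).le
  have hfst : dist x.1 y.1 = 1 / (m + 1) := by
    rw [Subtype.dist_eq, hx, hm, dist_zero_left, Real.norm_of_nonneg (by positivity)]
  have hsnd : dist (flipOn (fun k => g k = 1) x.2) (flipOn (fun k => k < m + 1 ∧ g k = 1) y.2) ≤
      max (dist x.2 y.2) ((1 / 2) ^ (m + 1)) :=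
    dist_flipOn_flipOn_le (fun k hk => by simp [hk]) x.2 y.2
  rw [hβ.over_zero g x hx, hβ.over_one_div_succ g y m hm, Prod.dist_eq, Prod.dist_eq]
  refine max_le (le_max_left _ _) (hsnd.trans (max_le (le_max_right _ _) ?_))
  exact (one_half_pow_succ_le m).trans (hfst.ge.trans (le_max_left _ _))

theorem eventually_dist_lt (hβ : IsProjectedFlipAction β) (x : Jset × (ℕ → Bool)) {ε : ℝ}
    (hε : 0 < ε) : ∀ᶠ y in 𝓝 x, ∀ g, dist (β g x) (β g y) < ε := by
  have hnear : ∀ᶠ y in 𝓝 x, dist x y < ε :=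
    Metric.eventually_nhds_iff.2 ⟨ε, hε, fun y hy => by rwa [dist_comm]⟩
  rcases x.1.2 with h0 | ⟨n, hn⟩
  · filter_upwards [hnear] with y hy g
      using (hβ.dist_le_of_fst_eq_zero g h0 y).trans_lt hy
  · have hfst : ∀ᶠ y in 𝓝 x, y.1 = x.1 :=
      (continuous_fst.tendsto x).eventually (Jset.eventually_eq_of_eq_one_div_succ hn)
    filter_upwards [hnear, hfst] with y hy hxy g
      using (hβ.dist_eq_of_fst_eq g hxy.symm).trans_lt hy

theorem continuous (hβ : IsProjectedFlipAction β) (g : ℕ →₀ ZMod 2) : Continuous (β g) :=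
  continuous_iff_continuousAt.2 fun x => Metric.continuousAt_iff'.2 fun _ hε =>
    (hβ.eventually_dist_lt x hε).mono fun y hy => by rw [dist_comm]; exact hy g

theorem card_range_of_fst_eq_one_div_succ (hβ : IsProjectedFlipAction β)
    {p : Jset × (ℕ → Bool)} {n : ℕ} (hp : (p.1 : ℝ) = 1 / (n + 1)) :
    Nat.card (Set.range fun g => β g p) = 2 ^ (n + 1) := by
  have : (fun g => β g p) = Prod.mk p.1 ∘ fun g => flipOn (fun k => k < n + 1 ∧ g k = 1) p.2 :=
    funext fun g => hβ.over_one_div_succ g p n hp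
  rw [this, Set.range_comp, Nat.card_image_of_injective (Prod.mk_right_injective _),
    card_range_flipOn_lt]

theorem infinite_range_of_fst_eq_zero (hβ : IsProjectedFlipAction β)
    {p : Jset × (ℕ → Bool)} (hp : (p.1 : ℝ) = 0) : (Set.range fun g => β g p).Infinite := by
  have : (fun g => β g p) = Prod.mk p.1 ∘ fun g => flipOn (fun k => g k = 1) p.2 :=
    funext fun g => hβ.over_zero g p hp
  rw [this]
  exact Set.infinite_range_of_injective
    ((Prod.mk_right_injective _).comp (injective_flipOn_eq_one p.2))

end IsProjectedFlipAction

/-- The action `β` of `G = ⊕_k ℤ/2` on `X = J × D`: over the point `1/(n+1)` only the first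
`n+1` coordinates of `g` act (the projection `p_{n+1}(g)` flips coordinates), while over `0`
all of `g` acts.  Then: (a) the orbit of a point over `1/(n+1)` is finite of cardinality
`2^{n+1}`; (b) the orbit of a point over `0` is infinite; (c) the action is by homeomorphisms
(each `β g` is continuous, hence a homeomorphism with inverse `β g`) and is Lyapunov stable
for the product metric. -/
theorem stmt16
    (β : (ℕ →₀ ZMod 2) → Jset × (ℕ → Bool) → Jset × (ℕ → Bool))
    (hβ0 : ∀ (g : ℕ →₀ ZMod 2) (p : Jset × (ℕ → Bool)), (p.1 : ℝ) = 0 →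
      β g p = (p.1, fun k => if g k = 1 then !(p.2 k) else p.2 k))
    (hβn : ∀ (g : ℕ →₀ ZMod 2) (p : Jset × (ℕ → Bool)) (n : ℕ), (p.1 : ℝ) = 1 / (n + 1) →
      β g p = (p.1, fun k => if k < n + 1 ∧ g k = 1 then !(p.2 k) else p.2 k)) :
    (∀ (p : Jset × (ℕ → Bool)) (n : ℕ), (p.1 : ℝ) = 1 / (n + 1) →
      Nat.card (Set.range fun g => β g p) = 2 ^ (n + 1)) ∧
    (∀ p : Jset × (ℕ → Bool), (p.1 : ℝ) = 0 →
      (Set.range fun g => β g p).Infinite) ∧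
    (∀ g : ℕ →₀ ZMod 2, Continuous (β g)) ∧
    (∀ ε > (0 : ℝ), ∀ x : Jset × (ℕ → Bool), ∃ δ > (0 : ℝ),
      ∀ (g : ℕ →₀ ZMod 2) (y : Jset × (ℕ → Bool)),
        dist x y < δ → dist (β g x) (β g y) < ε) := by
  have hβ : IsProjectedFlipAction β := ⟨hβ0, hβn⟩
  refine ⟨fun p n hp => hβ.card_range_of_fst_eq_one_div_succ hp,
    fun p hp => hβ.infinite_range_of_fst_eq_zero hp, hβ.continuous, fun ε hε x => ?_⟩
  obtain ⟨δ, hδ, h⟩ := Metric.eventually_nhds_iff.1 (hβ.eventually_dist_lt x hε)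
  exact ⟨δ, hδ, fun g y hy => h (by rwa [dist_comm]) g⟩
end

section
/- Let Γ be a group acting on a set S, and suppose f : Γ → ℂ is a bounded function of the form f(g) = φ(g•x) where the set of translates {h ↦ f(gh) : g ∈ Γ} is totally bounded in sup norm (f is almost periodic). Then there is exactly one left-invariant mean value: if M₁ and M₂ are two means on the space AP(Γ) of almost periodic functions on Γ (positive linear functionals with M(1) = 1) that are both left- and right-invariant, then M₁(f) = M₂(f) for every almost periodic f. -/
/-!
Von Neumann's argument. For an almost periodic `f`, some convex combination of two-sided
translates `h ↦ f (a * h * b)` is uniformly within `ε` of a constant. For real `f`, let `α` be the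
infimum of `sup u` over that convex hull and take `u` with `sup u` close to `α`: if `u` dipped
below `α - ε` somewhere, averaging `u` over a finite net of left translates would lower every
value by about `ε / #net`, producing a combination with supremum below `α`. A complex `f` is
handled by applying this to the real part and then to the imaginary part. A bi-invariant mean
takes the value `M f` on the whole hull and is `1`-Lipschitz for the sup norm, so any two such
means are within `2ε` of the same constant.

The finite nets used above come from transposition: if the rows `x ↦ F x` of a bounded `F`
with values in a proper space are totally bounded in sup norm, so are its columns. This turns total
boundedness of the left translates of `f` into that of its right and two-sided translates.
-/

def IsAlmostPeriodic {Γ : Type*} [Group Γ] (f : Γ → ℂ) : Prop :=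
  (∃ C : ℝ, ∀ g, ‖f g‖ ≤ C) ∧
    TotallyBounded {F : UniformFun Γ ℂ | ∃ g : Γ, F = UniformFun.ofFun fun h => f (g * h)}

open Set Uniformity

theorem TotallyBounded.exists_finset_forall_mem_of_range {Y α : Type*} [UniformSpace α]
    {v : Y → α} (hv : TotallyBounded (range v)) {U : SetRel α α} (hU : U ∈ 𝓤 α) :
    ∃ Q : Finset Y, ∀ y, ∃ q ∈ Q, (v y, v q) ∈ U := by
  classical
  obtain ⟨t, hts, htf, hcov⟩ := hv.exists_subset hU
  obtain ⟨Q, -, hQ⟩ := (Finset.subset_set_image_iff (s := univ) (t := htf.toFinset) (f := v)).1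
    (by simpa [image_univ] using hts)
  refine ⟨Q, fun y => ?_⟩
  obtain ⟨z, hzt, hyz⟩ := mem_iUnion₂.1 (hcov (mem_range_self y))
  obtain ⟨q, hqQ, rfl⟩ := Finset.mem_image.1 (hQ ▸ htf.mem_toFinset.2 hzt)
  exact ⟨q, hqQ, hyz⟩

def RowsTotallyBounded {X Y E : Type*} [PseudoMetricSpace E] (F : X → Y → E) : Prop :=
  ∀ ε > 0, ∃ P : Finset X, ∀ x, ∃ p ∈ P, ∀ y, dist (F x y) (F p y) ≤ ε

namespace RowsTotallyBounded

variable {X Y E : Type*}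

theorem of_totallyBounded [PseudoMetricSpace E] {F : X → Y → E}
    (hF : TotallyBounded (range fun x => UniformFun.ofFun (F x))) : RowsTotallyBounded F := by
  intro ε hε
  have hV : {p : E × E | dist p.1 p.2 ≤ ε} ∈ 𝓤 E :=
    Metric.mem_uniformity_dist.2 ⟨ε, hε, fun _ _ h => le_of_lt h⟩
  exact hF.exists_finset_forall_mem_of_range ((UniformFun.hasBasis_uniformity Y E).mem_of_mem hV)

theorem comp [PseudoMetricSpace E] {E' : Type*} [PseudoMetricSpace E'] {F : X → Y → E}
    (hF : RowsTotallyBounded F) {g : E → E'} (hg : LipschitzWith 1 g) :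
    RowsTotallyBounded fun x y => g (F x y) := by
  intro ε hε
  obtain ⟨P, hP⟩ := hF ε hε
  refine ⟨P, fun x => ?_⟩
  obtain ⟨p, hp, hxp⟩ := hP x
  exact ⟨p, hp, fun y => (hg.dist_le_mul _ _).trans (by simpa using hxp y)⟩

theorem flip [SeminormedAddCommGroup E] [ProperSpace E] {F : X → Y → E}
    (hF : RowsTotallyBounded F) {C : ℝ} (hC : ∀ x y, ‖F x y‖ ≤ C) :
    RowsTotallyBounded (flip F) := by
  intro ε hε
  obtain ⟨P, hP⟩ := hF (ε / 3) (by positivity)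
  let v : Y → P → E := fun y p => F p y
  have hv : Bornology.IsBounded (range v) :=
    Bornology.forall_isBounded_image_eval_iff.1 fun p =>
      (Metric.isBounded_closedBall (x := 0) (r := C)).subset <| by
        rintro _ ⟨_, ⟨y, rfl⟩, rfl⟩
        simpa using hC p y
  obtain ⟨Q, hQ⟩ := (hv.isCompact_closure.totallyBounded.subset subset_closure)
    |>.exists_finset_forall_mem_of_range (Metric.dist_mem_uniformity (ε := ε / 3) (by positivity))
  refine ⟨Q, fun y => ?_⟩
  obtain ⟨q, hq, hyq⟩ := hQ y
  refine ⟨q, hq, fun x => ?_⟩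
  obtain ⟨p, hp, hxp⟩ := hP x
  have hpy : dist (F p y) (F p q) ≤ ε / 3 := (dist_le_pi_dist (v y) (v q) ⟨p, hp⟩).trans hyq.le
  calc dist (F x y) (F x q) ≤ dist (F x y) (F p y) + dist (F p y) (F p q) + dist (F p q) (F x q) :=
        dist_triangle4 ..
    _ ≤ ε / 3 + ε / 3 + ε / 3 := by
        gcongr
        · exact hxp y
        · rw [dist_comm]; exact hxp q
    _ = ε := by ring

end RowsTotallyBounded

section TranslateHull

variable {Γ E : Type*} [Monoid Γ] [AddCommGroup E] [Module ℝ E]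

def translateHull (f : Γ → E) : Set (Γ → E) :=
  convexHull ℝ (range fun p : Γ × Γ => fun h => f (p.1 * h * p.2))

theorem translate_mem_translateHull (f : Γ → E) (a b : Γ) :
    (fun h => f (a * h * b)) ∈ translateHull f :=
  subset_convexHull ℝ _ ⟨(a, b), rfl⟩

theorem self_mem_translateHull (f : Γ → E) : f ∈ translateHull f := by
  simpa using translate_mem_translateHull f 1 1

theorem translateHull_subset_of_convex {f : Γ → E} {s : Set (Γ → E)} (hs : Convex ℝ s)
    (hf : ∀ a b, (fun h => f (a * h * b)) ∈ s) : translateHull f ⊆ s :=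
  convexHull_min (range_subset_iff.2 fun p => hf p.1 p.2) hs

theorem translate_mem_translateHull_of_mem {f u : Γ → E} (hu : u ∈ translateHull f) (a b : Γ) :
    (fun h => u (a * h * b)) ∈ translateHull f := by
  refine translateHull_subset_of_convex
    ((convex_convexHull ℝ _).linear_preimage (LinearMap.funLeft ℝ E fun h => a * h * b))
    (fun a' b' => ?_) hu
  show (fun h => f (a' * (a * h * b) * b')) ∈ translateHull f
  simpa [mul_assoc] using translate_mem_translateHull f (a' * a) (b * b')

theorem translateHull_subset {f u : Γ → E} (hu : u ∈ translateHull f) :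
    translateHull u ⊆ translateHull f :=
  translateHull_subset_of_convex (convex_convexHull ℝ _) (translate_mem_translateHull_of_mem hu)

theorem average_mem_translateHull {f u : Γ → E} (hu : u ∈ translateHull f) {T : Finset Γ}
    (hT : T.Nonempty) : (fun h => (T.card : ℝ)⁻¹ • ∑ y ∈ T, u (y * h)) ∈ translateHull f := by
  have := (convex_convexHull ℝ _).sum_mem (t := T) (w := fun _ => (T.card : ℝ)⁻¹)
    (fun _ _ => by positivity) (by simp [hT.card_pos.ne'])
    fun y _ => translate_mem_translateHull_of_mem hu y 1
  simpa [translateHull, Finset.smul_sum, Finset.sum_fn] using this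

theorem apply_mem_of_mem_translateHull {f u : Γ → E} {S : Set E} (hS : Convex ℝ S)
    (hf : ∀ h, f h ∈ S) (hu : u ∈ translateHull f) (h : Γ) : u h ∈ S :=
  translateHull_subset_of_convex (s := univ.pi fun _ => S) (convex_pi fun _ _ => hS)
    (fun _ _ _ _ => hf _) hu h (mem_univ h)

theorem translateHull_comp {F : Type*} [AddCommGroup F] [Module ℝ F] (φ : E →ₗ[ℝ] F)
    (f : Γ → E) : translateHull (φ ∘ f) = φ.compLeft Γ '' translateHull f := by
  rw [translateHull, translateHull, LinearMap.image_convexHull, ← range_comp]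
  rfl

end TranslateHull

section NormedTranslateHull

variable {Γ E : Type*} [Monoid Γ] [SeminormedAddCommGroup E] [NormedSpace ℝ E]

theorem dist_le_of_mem_translateHull {f u : Γ → E} {x y : Γ} {δ : ℝ}
    (hf : ∀ p : Γ × Γ, dist (f (p.1 * x * p.2)) (f (p.1 * y * p.2)) ≤ δ)
    (hu : u ∈ translateHull f) (p : Γ × Γ) : dist (u (p.1 * x * p.2)) (u (p.1 * y * p.2)) ≤ δ := by
  let D : (Γ → E) →ₗ[ℝ] Γ × Γ → E := LinearMap.pi fun p =>
    LinearMap.proj (R := ℝ) (φ := fun _ : Γ => E) (p.1 * x * p.2) - LinearMap.proj (p.1 * y * p.2)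
  have hD : ∀ w, w ∈ D ⁻¹' univ.pi (fun _ => Metric.closedBall 0 δ) ↔
      ∀ p : Γ × Γ, dist (w (p.1 * x * p.2)) (w (p.1 * y * p.2)) ≤ δ := by
    simp [D, dist_eq_norm]
  refine (hD u).1 (translateHull_subset_of_convex
    ((convex_pi fun _ _ => convex_closedBall 0 δ).linear_preimage D) (fun a b => ?_) hu) p
  refine (hD _).2 fun q => ?_
  simpa [mul_assoc] using hf (a * q.1, q.2 * b)

theorem RowsTotallyBounded.of_mem_translateHull {f u : Γ → E}
    (hf : RowsTotallyBounded fun x (p : Γ × Γ) => f (p.1 * x * p.2)) (hu : u ∈ translateHull f) :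
    RowsTotallyBounded fun x (p : Γ × Γ) => u (p.1 * x * p.2) := by
  intro ε hε
  obtain ⟨T, hT⟩ := hf ε hε
  refine ⟨T, fun x => ?_⟩
  obtain ⟨y, hy, hxy⟩ := hT x
  exact ⟨y, hy, dist_le_of_mem_translateHull hxy hu⟩

end NormedTranslateHull

section VonNeumann

variable {Γ : Type*} [Group Γ]

theorem sum_translate_le {u : Γ → ℝ} {B δ : ℝ} (hB : ∀ h, u h ≤ B) {T : Finset Γ}
    (hT : ∀ x, ∃ y ∈ T, ∀ b, dist (u (x * b)) (u (y * b)) ≤ δ) (h₀ h : Γ) :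
    ∑ y ∈ T, u (y * h) ≤ T.card * B - (B - δ - u h₀) := by
  obtain ⟨y₀, hy₀, hy₀h⟩ := hT (h₀ * h⁻¹)
  have hlow : u (y₀ * h) ≤ u h₀ + δ := by
    have := hy₀h h
    rw [inv_mul_cancel_right, Real.dist_eq] at this
    linarith [abs_le.1 this]
  have : ∑ y ∈ T, (u (y * h) - B) ≤ ∑ y ∈ {y₀}, (u (y * h) - B) :=
    Finset.sum_le_sum_of_subset_of_nonpos' (by simpa using hy₀)
      fun y _ _ => by linarith [hB (y * h)]
  simp only [Finset.sum_sub_distrib, Finset.sum_const, nsmul_eq_mul,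
    Finset.sum_singleton, Finset.card_singleton, Nat.cast_one, one_mul] at this
  linarith

theorem exists_mem_translateHull_abs_sub_le {r : Γ → ℝ} {C : ℝ} (hC : ∀ h, |r h| ≤ C)
    (hr : RowsTotallyBounded fun x (p : Γ × Γ) => r (p.1 * x * p.2)) {ε : ℝ} (hε : 0 < ε) :
    ∃ u ∈ translateHull r, ∃ c, ∀ h, |u h - c| ≤ ε := by
  have hbdd : ∀ u ∈ translateHull r, ∀ h, |u h| ≤ C := fun u hu h =>
    abs_le.2 (apply_mem_of_mem_translateHull (convex_Icc (-C) C) (fun h => abs_le.1 (hC h)) hu h)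
  have hbddAbove : ∀ u ∈ translateHull r, BddAbove (range u) := fun u hu =>
    ⟨C, by rintro _ ⟨h, rfl⟩; exact (abs_le.1 (hbdd u hu h)).2⟩
  set A := (fun u : Γ → ℝ => ⨆ h, u h) '' translateHull r
  have hA : BddBelow A := ⟨-C, by
    rintro _ ⟨u, hu, rfl⟩
    exact (abs_le.1 (hbdd u hu 1)).1.trans (le_ciSup (hbddAbove u hu) 1)⟩
  set α := sInf A
  obtain ⟨T, hT⟩ := hr (ε / 4) (by positivity)
  have hTne : T.Nonempty := by
    obtain ⟨y, hy, -⟩ := hT 1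
    exact ⟨y, hy⟩
  set N : ℝ := (T.card : ℝ)
  have hN : 1 ≤ N := Nat.one_le_cast.2 hTne.card_pos
  obtain ⟨_, ⟨u, hu, rfl⟩, hsup⟩ := Real.lt_sInf_add_pos (s := A)
    ⟨_, mem_image_of_mem _ (self_mem_translateHull r)⟩ (show 0 < ε / (2 * N) by positivity)
  have hαu : α ≤ ⨆ h, u h := csInf_le hA ⟨u, hu, rfl⟩
  refine ⟨u, hu, α, fun h₀ => abs_le.2 ⟨?_, ?_⟩⟩
  · by_contra! hlow
    set v := fun h => N⁻¹ • ∑ y ∈ T, u (y * h)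
    have hv : v ∈ translateHull r := average_mem_translateHull hu hTne
    have hvα : ∀ h, v h ≤ α - ε / (4 * N) := fun h => by
      have hsum := sum_translate_le (fun h => le_ciSup (hbddAbove u hu) h)
        (fun x => (hT x).imp fun y ⟨hy, hxy⟩ =>
          ⟨hy, fun b => by simpa using dist_le_of_mem_translateHull hxy hu (1, b)⟩) h₀ h
      have hNsup : N * ⨆ h, u h ≤ N * α + ε / 2 :=
        calc N * ⨆ h, u h ≤ N * (α + ε / (2 * N)) := by gcongr
          _ = N * α + ε / 2 := by field_simp
      have hNα : N * (α - ε / (4 * N)) = N * α - ε / 4 := by field_simp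
      rw [show v h = N⁻¹ * ∑ y ∈ T, u (y * h) from rfl, inv_mul_le_iff₀ (by positivity), hNα]
      linarith
    have := (csInf_le hA ⟨v, hv, rfl⟩).trans (ciSup_le hvα)
    linarith [show 0 < ε / (4 * N) by positivity]
  · have := (le_ciSup (hbddAbove u hu) h₀).trans hsup.le
    have := div_le_self hε.le (by linarith : (1 : ℝ) ≤ 2 * N)
    linarith

end VonNeumann

section Complex

variable {Γ : Type*} [Group Γ]

theorem exists_mem_translateHull_abs_comp_sub_le (φ : ℂ →ₗ[ℝ] ℝ) (hφ : ∀ z, |φ z| ≤ ‖z‖)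
    {f : Γ → ℂ} {C : ℝ} (hC : ∀ h, ‖f h‖ ≤ C)
    (hf : RowsTotallyBounded fun x (p : Γ × Γ) => f (p.1 * x * p.2)) {ε : ℝ} (hε : 0 < ε) :
    ∃ w ∈ translateHull f, ∃ c, ∀ h, |φ (w h) - c| ≤ ε := by
  have hφ₁ : LipschitzWith 1 φ := LipschitzWith.of_dist_le_mul fun z z' => by
    simpa [Real.dist_eq, dist_eq_norm, ← map_sub] using hφ (z - z')
  obtain ⟨u, hu, c, huc⟩ := exists_mem_translateHull_abs_sub_le (r := φ ∘ f)
    (fun h => (hφ _).trans (hC h)) (hf.comp hφ₁) hε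
  rw [translateHull_comp] at hu
  obtain ⟨w, hw, rfl⟩ := hu
  exact ⟨w, hw, c, huc⟩

theorem exists_mem_translateHull_norm_sub_le {f : Γ → ℂ} {C : ℝ} (hC : ∀ h, ‖f h‖ ≤ C)
    (hf : RowsTotallyBounded fun x (p : Γ × Γ) => f (p.1 * x * p.2)) {ε : ℝ} (hε : 0 < ε) :
    ∃ w ∈ translateHull f, ∃ c : ℂ, ∀ h, ‖w h - c‖ ≤ ε := by
  obtain ⟨w₁, hw₁, a, ha⟩ := exists_mem_translateHull_abs_comp_sub_le Complex.reLm
    Complex.abs_re_le_norm hC hf (half_pos hε)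
  have hC₁ (h : Γ) : ‖w₁ h‖ ≤ C := by
    simpa using apply_mem_of_mem_translateHull (convex_closedBall 0 C) (by simpa using hC) hw₁ h
  obtain ⟨w, hw, b, hb⟩ := exists_mem_translateHull_abs_comp_sub_le Complex.imLm
    Complex.abs_im_le_norm hC₁ (hf.of_mem_translateHull hw₁) (half_pos hε)
  have ha' (h : Γ) : |(w h).re - a| ≤ ε / 2 := by
    simpa [Real.dist_eq] using apply_mem_of_mem_translateHull
      ((convex_closedBall a (ε / 2)).linear_preimage Complex.reLm)
      (by simpa [Real.dist_eq] using ha) hw h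
  refine ⟨w, translateHull_subset hw₁ hw, ⟨a, b⟩, fun h => ?_⟩
  calc ‖w h - ⟨a, b⟩‖ ≤ |(w h - ⟨a, b⟩).re| + |(w h - ⟨a, b⟩).im| :=
        Complex.norm_le_abs_re_add_abs_im _
    _ ≤ ε / 2 + ε / 2 := add_le_add (by simpa using ha' h) (by simpa using hb h)
    _ = ε := add_halves ε

end Complex

section AlmostPeriodic

variable {Γ : Type*} [Group Γ] {f g : Γ → ℂ}

theorem isAlmostPeriodic_iff : IsAlmostPeriodic f ↔ (∃ C : ℝ, ∀ g, ‖f g‖ ≤ C) ∧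
    TotallyBounded (range fun g : Γ => UniformFun.ofFun fun h => f (g * h)) := by
  simp only [IsAlmostPeriodic, range, eq_comm]

theorem isAlmostPeriodic_const (c : ℂ) : IsAlmostPeriodic fun _ : Γ => c :=
  isAlmostPeriodic_iff.2 ⟨⟨‖c‖, fun _ => le_rfl⟩,
    (totallyBounded_singleton (UniformFun.ofFun fun _ : Γ => c)).subset range_const_subset⟩

namespace IsAlmostPeriodic

theorem translate (hf : IsAlmostPeriodic f) (a b : Γ) :
    IsAlmostPeriodic fun h => f (a * h * b) := by
  obtain ⟨⟨C, hC⟩, hf⟩ := isAlmostPeriodic_iff.1 hf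
  refine isAlmostPeriodic_iff.2 ⟨⟨C, fun _ => hC _⟩,
    (hf.image (UniformFun.precomp_uniformContinuous (f := fun h : Γ => h * b))).subset ?_⟩
  rintro _ ⟨g, rfl⟩
  exact ⟨_, ⟨a * g, rfl⟩, by simp [Function.comp_def, mul_assoc]⟩

theorem smul (c : ℂ) (hf : IsAlmostPeriodic f) : IsAlmostPeriodic (c • f) := by
  obtain ⟨⟨C, hC⟩, hf⟩ := isAlmostPeriodic_iff.1 hf
  refine isAlmostPeriodic_iff.2 ⟨⟨‖c‖ * C, fun g => ?_⟩, (hf.image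
    (UniformFun.postcomp_uniformContinuous (uniformContinuous_const_smul c))).subset ?_⟩
  · simpa [norm_smul] using mul_le_mul_of_nonneg_left (hC g) (norm_nonneg c)
  · rintro _ ⟨g, rfl⟩
    exact ⟨_, ⟨g, rfl⟩, rfl⟩

theorem add (hf : IsAlmostPeriodic f) (hg : IsAlmostPeriodic g) : IsAlmostPeriodic (f + g) := by
  obtain ⟨⟨C, hC⟩, hf⟩ := isAlmostPeriodic_iff.1 hf
  obtain ⟨⟨D, hD⟩, hg⟩ := isAlmostPeriodic_iff.1 hg
  have hK := (((hf.closure.isCompact_of_isClosed isClosed_closure).prod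
    (hg.closure.isCompact_of_isClosed isClosed_closure)).image continuous_add).totallyBounded
  refine isAlmostPeriodic_iff.2
    ⟨⟨C + D, fun x => (norm_add_le _ _).trans (add_le_add (hC x) (hD x))⟩, hK.subset ?_⟩
  rintro _ ⟨x, rfl⟩
  exact ⟨(_, _), ⟨subset_closure ⟨x, rfl⟩, subset_closure ⟨x, rfl⟩⟩, rfl⟩

theorem rowsTotallyBounded_translate (hf : IsAlmostPeriodic f) :
    RowsTotallyBounded fun x (p : Γ × Γ) => f (p.1 * x * p.2) := by
  obtain ⟨⟨C, hC⟩, hf⟩ := isAlmostPeriodic_iff.1 hf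
  have hleft : RowsTotallyBounded fun g h => f (g * h) := .of_totallyBounded hf
  have hright := hleft.flip fun _ _ => hC _
  have htwo : RowsTotallyBounded fun (p : Γ × Γ) x => f (p.1 * x * p.2) := by
    intro ε hε
    obtain ⟨P, hP⟩ := hleft (ε / 2) (half_pos hε)
    obtain ⟨Q, hQ⟩ := hright (ε / 2) (half_pos hε)
    refine ⟨P ×ˢ Q, fun ⟨a, b⟩ => ?_⟩
    obtain ⟨p, hp, hap⟩ := hP a
    obtain ⟨q, hq, hbq⟩ := hQ b
    refine ⟨(p, q), Finset.mem_product.2 ⟨hp, hq⟩, fun x => ?_⟩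
    calc dist (f (a * x * b)) (f (p * x * q))
        ≤ dist (f (a * (x * b))) (f (p * (x * b))) + dist (f (p * x * b)) (f (p * x * q)) := by
          rw [← mul_assoc, ← mul_assoc]; exact dist_triangle _ _ _
      _ ≤ ε / 2 + ε / 2 := add_le_add (hap _) (hbq _)
      _ = ε := add_halves ε
  exact htwo.flip fun _ _ => hC _

end IsAlmostPeriodic

end AlmostPeriodic

structure IsBiInvariantMean {Γ : Type*} [Group Γ] (M : (Γ → ℂ) → ℂ) : Prop where
  map_add : ∀ f₁ f₂ : Γ → ℂ, IsAlmostPeriodic f₁ → IsAlmostPeriodic f₂ →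
    M (f₁ + f₂) = M f₁ + M f₂
  map_smul : ∀ (c : ℂ) (f : Γ → ℂ), IsAlmostPeriodic f → M (c • f) = c * M f
  map_one : M (fun _ => 1) = 1
  norm_le : ∀ (f : Γ → ℂ) (C : ℝ), IsAlmostPeriodic f → (∀ g, ‖f g‖ ≤ C) → ‖M f‖ ≤ C
  left_invariant : ∀ (f : Γ → ℂ) (g : Γ), IsAlmostPeriodic f → M (fun h => f (g * h)) = M f
  right_invariant : ∀ (f : Γ → ℂ) (g : Γ), IsAlmostPeriodic f → M (fun h => f (h * g)) = M f

namespace IsBiInvariantMean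

variable {Γ : Type*} [Group Γ] {M : (Γ → ℂ) → ℂ} {f : Γ → ℂ}

theorem map_const (hM : IsBiInvariantMean M) (c : ℂ) : M (fun _ => c) = c := by
  have hc : (fun _ : Γ => c) = c • fun _ => 1 := funext fun _ => (mul_one c).symm
  rw [hc, hM.map_smul c _ (isAlmostPeriodic_const 1), hM.map_one, mul_one]

theorem map_translate (hM : IsBiInvariantMean M) (hf : IsAlmostPeriodic f) (a b : Γ) :
    M (fun h => f (a * h * b)) = M f := by
  have hfa : IsAlmostPeriodic fun h => f (a * h) := by simpa using hf.translate a 1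
  simpa [mul_assoc, hM.left_invariant f a hf] using hM.right_invariant _ b hfa

theorem isAlmostPeriodic_and_eq_of_mem_translateHull (hM : IsBiInvariantMean M)
    (hf : IsAlmostPeriodic f) {u : Γ → ℂ} (hu : u ∈ translateHull f) :
    IsAlmostPeriodic u ∧ M u = M f := by
  refine translateHull_subset_of_convex (s := {u | IsAlmostPeriodic u ∧ M u = M f}) ?_
    (fun a b => ⟨hf.translate a b, hM.map_translate hf a b⟩) hu
  rintro v ⟨hv, hMv⟩ w ⟨hw, hMw⟩ s t - - hst
  rw [← Complex.coe_smul, ← Complex.coe_smul]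
  refine ⟨(hv.smul s).add (hw.smul t), ?_⟩
  rw [hM.map_add _ _ (hv.smul s) (hw.smul t), hM.map_smul _ _ hv, hM.map_smul _ _ hw, hMv, hMw,
    ← add_mul, ← Complex.ofReal_add, hst, Complex.ofReal_one, one_mul]

theorem norm_sub_le_of_forall_norm_sub_le (hM : IsBiInvariantMean M) {w : Γ → ℂ}
    (hw : IsAlmostPeriodic w) {c : ℂ} {ε : ℝ} (hwc : ∀ h, ‖w h - c‖ ≤ ε) : ‖M w - c‖ ≤ ε := by
  have hc : IsAlmostPeriodic fun _ : Γ => -c := isAlmostPeriodic_const _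
  have := hM.norm_le (w + fun _ => -c) ε (hw.add hc) (by simpa [sub_eq_add_neg] using hwc)
  rwa [hM.map_add _ _ hw hc, hM.map_const, ← sub_eq_add_neg] at this

theorem eq_of_isAlmostPeriodic {M₁ M₂ : (Γ → ℂ) → ℂ} (h₁ : IsBiInvariantMean M₁)
    (h₂ : IsBiInvariantMean M₂) (hf : IsAlmostPeriodic f) : M₁ f = M₂ f := by
  obtain ⟨C, hC⟩ := hf.1
  refine eq_of_forall_dist_le fun ε hε => ?_
  obtain ⟨w, hw, c, hwc⟩ :=
    exists_mem_translateHull_norm_sub_le hC hf.rowsTotallyBounded_translate (half_pos hε)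
  obtain ⟨hwap, hw₁⟩ := h₁.isAlmostPeriodic_and_eq_of_mem_translateHull hf hw
  have hw₂ := (h₂.isAlmostPeriodic_and_eq_of_mem_translateHull hf hw).2
  calc dist (M₁ f) (M₂ f) ≤ dist (M₁ f) c + dist (M₂ f) c := dist_triangle_right _ _ _
    _ ≤ ε / 2 + ε / 2 := by
      rw [dist_eq_norm, dist_eq_norm, ← hw₁, ← hw₂]
      exact add_le_add (h₁.norm_sub_le_of_forall_norm_sub_le hwap hwc)
        (h₂.norm_sub_le_of_forall_norm_sub_le hwap hwc)
    _ = ε := add_halves ε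

end IsBiInvariantMean

/-- Uniqueness of the von Neumann mean: any two left- and right-invariant means on the almost
periodic functions on a group `Γ` agree on every almost periodic function; in particular they
agree on every almost periodic function of the form `g ↦ φ(g • x)` coming from an action of
`Γ` on a set `S`. -/
theorem stmt17 {Γ S : Type*} [Group Γ] [MulAction Γ S]
    (M₁ M₂ : (Γ → ℂ) → ℂ)
    (hadd : ∀ M ∈ [M₁, M₂], ∀ f₁ f₂ : Γ → ℂ, IsAlmostPeriodic f₁ → IsAlmostPeriodic f₂ →
      M (f₁ + f₂) = M f₁ + M f₂)
    (hsmul : ∀ M ∈ [M₁, M₂], ∀ (c : ℂ) (f : Γ → ℂ), IsAlmostPeriodic f →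
      M (c • f) = c * M f)
    (hone : ∀ M ∈ [M₁, M₂], M (fun _ => 1) = 1)
    (hbound : ∀ M ∈ [M₁, M₂], ∀ (f : Γ → ℂ) (C : ℝ), IsAlmostPeriodic f →
      (∀ g, ‖f g‖ ≤ C) → ‖M f‖ ≤ C)
    (hleft : ∀ M ∈ [M₁, M₂], ∀ (f : Γ → ℂ) (g : Γ), IsAlmostPeriodic f →
      M (fun h => f (g * h)) = M f)
    (hright : ∀ M ∈ [M₁, M₂], ∀ (f : Γ → ℂ) (g : Γ), IsAlmostPeriodic f →
      M (fun h => f (h * g)) = M f) :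
    (∀ (φ : S → ℂ) (x : S), IsAlmostPeriodic (fun g : Γ => φ (g • x)) →
      M₁ (fun g : Γ => φ (g • x)) = M₂ (fun g : Γ => φ (g • x))) ∧
    ∀ f : Γ → ℂ, IsAlmostPeriodic f → M₁ f = M₂ f := by
  have hM : ∀ M ∈ [M₁, M₂], IsBiInvariantMean M := fun M hM =>
    ⟨hadd M hM, hsmul M hM, hone M hM, hbound M hM, hleft M hM, hright M hM⟩
  have heq : ∀ f : Γ → ℂ, IsAlmostPeriodic f → M₁ f = M₂ f := fun _ =>
    (hM M₁ (by simp)).eq_of_isAlmostPeriodic (hM M₂ (by simp))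
  exact ⟨fun _ _ => heq _, heq⟩
end
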